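/- arXiv:2505.05569 — 14 statements merged into one kernel-verified Lean document; each statement's English description precedes it below -/
import Mathlib

section
/- Let G be a σ-p-group and let N ⊴ G be a non-trivial σ-invariant normal subgroup. Then N contains a σ-invariant subgroup of order p that is normal in G. -/
/-- Let `G` be a `σ`-`p`-group and `N ⊴ G` a non-trivial
`σ`-invariant normal subgroup. Then `N` contains a `σ`-invariant subgroup of
order `p` that is normal in `G`. -/
theorem sigma_p_group_exists_normal_subgroup_of_order_p
    {p : ℕ} (hp : p.Prime) (hodd : Odd p)
    {G : Type*} [Group G] [Finite G] (hG : IsPGroup p G)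
    (σ : G ≃* G) (hσ : ∀ a, σ (σ a) = a)
    (N : Subgroup G) [N.Normal] (hNσ : ∀ a, σ a ∈ N ↔ a ∈ N) (hN : N ≠ ⊥) :
    ∃ M : Subgroup G, M ≤ N ∧ M.Normal ∧ (∀ a, σ a ∈ M ↔ a ∈ M) ∧
      Nat.card M = p := by
  haveI : Fact p.Prime := ⟨hp⟩
  have hNp : IsPGroup p N := hG.to_subgroup N
  haveI : Nontrivial N := N.nontrivial_iff_ne_bot.mpr hN
  have hdvd : p ∣ Nat.card N := by
    obtain ⟨n, hn0, hn⟩ := hNp.nontrivial_iff_card.mp inferInstance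
    exact hn.symm ▸ dvd_pow_self _ hn0.ne'
  -- find a nontrivial element of N fixed by conjugation (i.e. central in G)
  have h1fix : (1 : N) ∈ MulAction.fixedPoints (ConjAct G) N := fun g => smul_one g
  obtain ⟨b, hbfix, hb1⟩ :=
    (hG.of_equiv ConjAct.toConjAct).exists_fixed_point_of_prime_dvd_card_of_fixed_point
      (α := N) hdvd h1fix
  have hz1 : (b : G) ≠ 1 := fun h => hb1 (Subtype.ext h).symm
  have hzcent : ∀ g : G, Commute g (b : G) := by
    intro g
    have h2 : g * (b : G) * g⁻¹ = (b : G) := congrArg Subtype.val (hbfix (ConjAct.toConjAct g))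
    rw [Commute, SemiconjBy]
    calc g * ↑b = g * ↑b * g⁻¹ * g := by group
    _ = ↑b * g := by rw [h2]
  -- extract an element of order p
  obtain ⟨m, hm⟩ := (IsPGroup.iff_orderOf.mp hG) (b : G)
  have hm1 : 1 ≤ m := by
    by_contra h
    push_neg at h
    interval_cases m
    exact hz1 (orderOf_eq_one_iff.mp (by simpa using hm))
  set g0 : G := (b : G) ^ (p ^ (m - 1)) with hg0
  have hg0ord : orderOf g0 = p := by
    rw [hg0, orderOf_pow' _ (pow_ne_zero _ hp.pos.ne'), hm,
      Nat.gcd_eq_right (pow_dvd_pow p (Nat.sub_le m 1)),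
      Nat.pow_div (Nat.sub_le m 1) hp.pos, Nat.sub_sub_self hm1, pow_one]
  have hg0N : g0 ∈ N := N.pow_mem b.2 _
  have hg0cent : ∀ g : G, Commute g g0 := fun g => (hzcent g).pow_right _
  -- σ of a central element is central
  have hσcent : ∀ g : G, Commute g (σ g0) := by
    intro g
    have : σ (σ g * g0) = σ (g0 * σ g) := by rw [(hg0cent (σ g)).eq]
    rw [map_mul, map_mul, hσ] at this
    exact this
  have hσg0N : σ g0 ∈ N := (hNσ g0).mpr hg0N
  -- the key generator: either g0 (if σ g0 = g0⁻¹) or g0 * σ g0 (σ-fixed)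
  have key : ∃ c : G, c ∈ N ∧ (∀ g : G, Commute g c) ∧ orderOf c = p ∧ σ c ∈ Subgroup.zpowers c := by
    by_cases hcase : g0 * σ g0 = 1
    · have hinv : σ g0 = g0⁻¹ :=
        eq_inv_iff_mul_eq_one.mpr (by rw [← (hσcent g0).eq]; exact hcase)
      exact ⟨g0, hg0N, hg0cent, hg0ord, by
        rw [hinv]; exact Subgroup.inv_mem _ (Subgroup.mem_zpowers g0)⟩
    · refine ⟨g0 * σ g0, N.mul_mem hg0N hσg0N, fun g => (hg0cent g).mul_right (hσcent g), ?_, ?_⟩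
      · have hpow : (g0 * σ g0) ^ p = 1 := by
          rw [(hσcent g0).mul_pow, ← map_pow, ← hg0ord, pow_orderOf_eq_one, map_one, mul_one]
        have := orderOf_dvd_of_pow_eq_one hpow
        rcases (Nat.dvd_prime hp).mp this with h | h
        · exact absurd (orderOf_eq_one_iff.mp h) hcase
        · exact h
      · have : σ (g0 * σ g0) = g0 * σ g0 := by
          rw [map_mul, hσ]; exact (hσcent g0).eq.symm
        rw [this]
        exact Subgroup.mem_zpowers _
  obtain ⟨c, hcN, hccent, hcord, hcσ⟩ := key
  refine ⟨Subgroup.zpowers c, Subgroup.zpowers_le.mpr hcN, ?_, ?_, by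
    rw [Nat.card_zpowers, hcord]⟩
  · constructor
    intro x hx g
    have : g * x * g⁻¹ = x := by
      obtain ⟨k, rfl⟩ := hx
      rw [((hccent g).zpow_right k).eq]
      group
    rwa [this]
  · have hfwd : ∀ a ∈ Subgroup.zpowers c, σ a ∈ Subgroup.zpowers c := by
      intro a ha
      obtain ⟨k, rfl⟩ := ha
      rw [map_zpow]
      exact Subgroup.zpow_mem _ hcσ k
    intro a
    exact ⟨fun h => hσ a ▸ hfwd _ h, fun h => hfwd a h⟩
end

section
/- Let G be a σ-p-group, let N ⊴ G be a σ-invariant normal subgroup, and let ε ∈ {+1,−1}. Then the projection G → G/N restricts to a surjective map G^ε → (G/N)^ε, and all fibers of this map have the same cardinality, namely |N^ε|. -/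
private lemma sigma_pow_helper {M : Type*} [Group M] (y : M) (k : ℕ)
    (h : y ^ (2 * k + 1) = 1) : y ^ k * y * y ^ k = 1 := by
  have : y ^ k * y * y ^ k = y ^ (k + 1 + k) := by
    rw [pow_add, pow_succ]
  rw [this, show k + 1 + k = 2 * k + 1 by omega, h]

private lemma sigma_pow_helper2 {M : Type*} [Group M] (y : M) (k : ℕ)
    (h : y ^ (2 * k + 1) = 1) : (y ^ k)⁻¹ * (y ^ k)⁻¹ = y := by
  have h1 := sigma_pow_helper y k h
  have := congrArg (fun z => (y ^ k)⁻¹ * z * (y ^ k)⁻¹) h1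
  simpa [mul_assoc] using this.symm

private lemma sigma_odd_orderOf {p : ℕ} (hp : p.Prime) (hodd : Odd p)
    {G : Type*} [Group G] (hG : IsPGroup p G) (a : G) : Odd (orderOf a) := by
  obtain ⟨k, hk⟩ := hG a
  have hdvd : orderOf a ∣ p ^ k := orderOf_dvd_of_pow_eq_one hk
  rcases Nat.even_or_odd (orderOf a) with he | ho
  · exfalso
    have h2 : 2 ∣ p ^ k := dvd_trans he.two_dvd hdvd
    have h3 := Nat.Prime.dvd_of_dvd_pow Nat.prime_two h2
    rw [Nat.odd_iff] at hodd
    omega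
  · exact ho

/-- lift for the even part -/
private lemma sigma_lift_plus {G : Type*} [Group G]
    (σ : G ≃* G) (hσ : ∀ a, σ (σ a) = a) (hoddord : ∀ a : G, Odd (orderOf a))
    (N : Subgroup G) [N.Normal]
    (g : G) (hg : ((σ g : G) : G ⧸ N) = (g : G ⧸ N)) :
    ∃ a : G, σ a = a ∧ (a : G ⧸ N) = (g : G ⧸ N) := by
  have hnN : g⁻¹ * σ g ∈ N := QuotientGroup.eq.1 hg.symm
  set n := g⁻¹ * σ g with hn_def
  have hσg : σ g = g * n := by rw [hn_def]; group
  have hσn : σ n = n⁻¹ := by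
    rw [hn_def, map_mul, map_inv, hσ, mul_inv_rev, inv_inv]
  obtain ⟨k, hk⟩ := hoddord n
  have hnk : n ^ (2 * k + 1) = 1 := by rw [← hk]; exact pow_orderOf_eq_one n
  refine ⟨g * n ^ (k + 1), ?_, ?_⟩
  · rw [map_mul, map_pow, hσn, hσg, inv_pow]
    -- g * n * (n ^ (k+1))⁻¹ = g * n ^ (k+1)
    have h2 : n ^ (k + 1) * n ^ (k + 1) = n := by
      rw [← pow_add, show k + 1 + (k + 1) = 2 * k + 1 + 1 by omega, pow_succ, hnk, one_mul]
    calc g * n * (n ^ (k + 1))⁻¹ = g * (n ^ (k + 1) * n ^ (k + 1)) * (n ^ (k + 1))⁻¹ := by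
          rw [h2]
      _ = g * n ^ (k + 1) := by group
  · have : ((n ^ (k + 1) : G) : G ⧸ N) = 1 :=
      (QuotientGroup.eq_one_iff _).2 (pow_mem hnN _)
    rw [QuotientGroup.mk_mul, this, mul_one]

/-- lift for the odd part -/
private lemma sigma_lift_minus {G : Type*} [Group G]
    (σ : G ≃* G) (hσ : ∀ a, σ (σ a) = a) (hoddord : ∀ a : G, Odd (orderOf a))
    (N : Subgroup G) [N.Normal]
    (g : G) (hg : ((σ g : G) : G ⧸ N) = ((g : G ⧸ N))⁻¹) :
    ∃ a : G, σ a = a⁻¹ ∧ (a : G ⧸ N) = (g : G ⧸ N) := by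
  have h0 : ((σ g : G) : G ⧸ N) = ((g⁻¹ : G) : G ⧸ N) := by
    rw [hg]; simp
  have h1 : (σ g)⁻¹ * g⁻¹ ∈ N := QuotientGroup.eq.1 h0
  have h2 : g * σ g ∈ N := by
    have := N.inv_mem h1
    simpa using this
  have hnN : σ g * g ∈ N := by
    have := Subgroup.Normal.conj_mem ‹N.Normal› _ h2 g⁻¹
    simpa [mul_assoc] using this
  set n := σ g * g with hn_def
  have hσg : σ g = n * g⁻¹ := by rw [hn_def]; group
  have hσn : σ n = g * n * g⁻¹ := by
    rw [hn_def, map_mul, hσ, hσg]; group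
  obtain ⟨k, hk⟩ := hoddord n
  have hnk : n ^ (2 * k + 1) = 1 := by rw [← hk]; exact pow_orderOf_eq_one n
  refine ⟨g * n ^ k, ?_, ?_⟩
  · have hconj : σ (n ^ k) = g * n ^ k * g⁻¹ := by
      rw [map_pow, hσn, conj_pow]
    rw [map_mul, hconj, hσg, mul_inv_rev]
    -- n * g⁻¹ * (g * n ^ k * g⁻¹) = (n ^ k)⁻¹ * g⁻¹
    have h3 : n * n ^ k = (n ^ k)⁻¹ := by
      have := sigma_pow_helper n k hnk
      -- n ^ k * n * n ^ k = 1
      exact eq_inv_of_mul_eq_one_left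
        (by rw [← pow_succ', ← pow_add, show k + 1 + k = 2 * k + 1 by omega]; exact hnk)
    calc n * g⁻¹ * (g * n ^ k * g⁻¹) = n * n ^ k * g⁻¹ := by group
      _ = (n ^ k)⁻¹ * g⁻¹ := by rw [h3]
  · have : ((n ^ k : G) : G ⧸ N) = 1 :=
      (QuotientGroup.eq_one_iff _).2 (pow_mem hnN _)
    rw [QuotientGroup.mk_mul, this, mul_one]

theorem sigma_p_group_quotient_parts_surjective_fibers
    {p : ℕ} (hp : p.Prime) (hodd : Odd p)
    {G : Type*} [Group G] [Finite G] (hG : IsPGroup p G)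
    (σ : G ≃* G) (hσ : ∀ a, σ (σ a) = a)
    (N : Subgroup G) [N.Normal] (hNσ : ∀ a, σ a ∈ N ↔ a ∈ N)
    (σbar : G ⧸ N →* G ⧸ N) (hσbar : ∀ g : G, σbar (g : G ⧸ N) = ((σ g : G) : G ⧸ N))
    (ε : ℤ) (hε : ε = 1 ∨ ε = -1) :
    Set.MapsTo (fun g : G => (g : G ⧸ N)) {a : G | σ a = a ^ ε}
      {x : G ⧸ N | σbar x = x ^ ε} ∧
    Set.SurjOn (fun g : G => (g : G ⧸ N)) {a : G | σ a = a ^ ε}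
      {x : G ⧸ N | σbar x = x ^ ε} ∧
    ∀ x : G ⧸ N, σbar x = x ^ ε →
      Nat.card {a : G // σ a = a ^ ε ∧ (a : G ⧸ N) = x} =
        Nat.card {a : G // a ∈ N ∧ σ a = a ^ ε} := by
  have hoddord : ∀ a : G, Odd (orderOf a) := sigma_odd_orderOf hp hodd hG
  rcases hε with rfl | rfl
  · -- ε = 1
    simp only [zpow_one]
    have hmaps : Set.MapsTo (fun g : G => (g : G ⧸ N)) {a : G | σ a = a}
        {x : G ⧸ N | σbar x = x} := by
      intro a ha
      simp only [Set.mem_setOf_eq] at ha ⊢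
      rw [hσbar, ha]
    refine ⟨hmaps, ?_, ?_⟩
    · intro x hx
      simp only [Set.mem_setOf_eq] at hx
      obtain ⟨g, rfl⟩ := QuotientGroup.mk_surjective x
      rw [hσbar] at hx
      obtain ⟨a, ha1, ha2⟩ := sigma_lift_plus σ hσ hoddord N g hx
      exact ⟨a, ha1, ha2⟩
    · intro x hx
      obtain ⟨g, rfl⟩ := QuotientGroup.mk_surjective x
      rw [hσbar] at hx
      obtain ⟨a, ha1, ha2⟩ := sigma_lift_plus σ hσ hoddord N g hx
      rw [← ha2]
      refine Nat.card_congr ?_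
      refine
        { toFun := fun b => ⟨a⁻¹ * b.1, ?_, ?_⟩
          invFun := fun m => ⟨a * m.1, ?_, ?_⟩
          left_inv := ?_
          right_inv := ?_ }
      · exact QuotientGroup.eq.1 b.2.2.symm
      · rw [map_mul, map_inv, ha1, b.2.1]
      · rw [map_mul, ha1, m.2.2]
      · rw [QuotientGroup.mk_mul, (QuotientGroup.eq_one_iff _).2 m.2.1, mul_one]
      · intro b; ext; simp
      · intro m; ext; simp
  · -- ε = -1
    simp only [zpow_neg_one] at *
    have hmaps : Set.MapsTo (fun g : G => (g : G ⧸ N)) {a : G | σ a = a⁻¹}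
        {x : G ⧸ N | σbar x = x⁻¹} := by
      intro a ha
      simp only [Set.mem_setOf_eq] at ha ⊢
      rw [hσbar, ha]
      simp
    refine ⟨hmaps, ?_, ?_⟩
    · intro x hx
      simp only [Set.mem_setOf_eq] at hx
      obtain ⟨g, rfl⟩ := QuotientGroup.mk_surjective x
      rw [hσbar] at hx
      obtain ⟨a, ha1, ha2⟩ := sigma_lift_minus σ hσ hoddord N g hx
      exact ⟨a, ha1, ha2⟩
    · intro x hx
      obtain ⟨g, rfl⟩ := QuotientGroup.mk_surjective x
      rw [hσbar] at hx
      obtain ⟨a, ha1, ha2⟩ := sigma_lift_minus σ hσ hoddord N g hx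
      rw [← ha2]
      obtain ⟨k, hk⟩ := hoddord a
      have hak : a ^ (2 * k + 1) = 1 := by rw [← hk]; exact pow_orderOf_eq_one a
      set c : G := a ^ k with hc_def
      have hσc : σ c = c⁻¹ := by rw [hc_def, map_pow, ha1, inv_pow]
      have hq : ((a : G ⧸ N)) ^ (2 * k + 1) = 1 := by
        have : ((a ^ (2 * k + 1) : G) : G ⧸ N) = 1 := by rw [hak]; rfl
        simpa using this
      have hq1 : (a : G ⧸ N) ^ k * (a : G ⧸ N) * (a : G ⧸ N) ^ k = 1 :=
        sigma_pow_helper _ k hq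
      have hq2 : ((a : G ⧸ N) ^ k)⁻¹ * ((a : G ⧸ N) ^ k)⁻¹ = (a : G ⧸ N) :=
        sigma_pow_helper2 _ k hq
      refine Nat.card_congr ?_
      refine
        { toFun := fun b => ⟨c * b.1 * c, ?_, ?_⟩
          invFun := fun m => ⟨c⁻¹ * m.1 * c⁻¹, ?_, ?_⟩
          left_inv := ?_
          right_inv := ?_ }
      · -- c * b * c ∈ N
        rw [← QuotientGroup.eq_one_iff]
        have : ((c * b.1 * c : G) : G ⧸ N)
            = (a : G ⧸ N) ^ k * (a : G ⧸ N) * (a : G ⧸ N) ^ k := by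
          rw [hc_def]
          simp only [QuotientGroup.mk_mul]
          rw [b.2.2]
          rfl
        rw [this, hq1]
      · -- σ (c * b * c) = (c * b * c)⁻¹
        rw [map_mul, map_mul, hσc, b.2.1]
        group
      · -- σ (c⁻¹ * m * c⁻¹) = (c⁻¹ * m * c⁻¹)⁻¹
        simp only [map_mul, map_inv, hσc, m.2.2]
        group
      · -- image of c⁻¹ * m * c⁻¹ is ⟦a⟧
        have hm1 : ((m.1 : G) : G ⧸ N) = 1 := (QuotientGroup.eq_one_iff _).2 m.2.1
        have : ((c⁻¹ * m.1 * c⁻¹ : G) : G ⧸ N)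
            = ((a : G ⧸ N) ^ k)⁻¹ * ((a : G ⧸ N) ^ k)⁻¹ := by
          rw [hc_def]
          simp only [QuotientGroup.mk_mul, QuotientGroup.mk_inv]
          rw [hm1]
          simp
        rw [this, hq2]
      · intro b; ext; simp [mul_assoc]
      · intro m; ext; simp [mul_assoc]
end

section
/- Let G be a σ-p-group, let N ⊴ G be a σ-invariant normal subgroup, and let ε ∈ {+1,−1}. Then |G^ε| = |(G/N)^ε| · |N^ε|. -/
section Aux

variable {H : Type*} [Group H]

private lemma odd_of_dvd' {d m : ℕ} (h : d ∣ m) (hm : Odd m) : Odd d := by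
  rcases Nat.even_or_odd d with he | ho
  · have h2 : 2 ∣ m := (even_iff_two_dvd.mp he).trans h
    exact absurd (even_iff_two_dvd.mpr h2) (Nat.not_even_iff_odd.mpr hm)
  · exact ho

private lemma oddOrd {p : ℕ} (hodd : Odd p) {H : Type*} [Group H]
    (hH : IsPGroup p H) (a : H) : Odd (orderOf a) := by
  obtain ⟨k, hk⟩ := hH a
  exact odd_of_dvd' (orderOf_dvd_of_pow_eq_one hk) (hodd.pow)

private lemma tau_one (τ : H → H) (hmul : ∀ a b, τ (a * b) = τ a * τ b) : τ 1 = 1 := by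
  have h := hmul 1 1
  rw [one_mul] at h
  exact (mul_left_cancel (a := τ 1) (by rw [mul_one, ← h])).symm

private lemma tau_inv (τ : H → H) (hmul : ∀ a b, τ (a * b) = τ a * τ b) (a : H) :
    τ a⁻¹ = (τ a)⁻¹ := by
  have h : τ a * τ a⁻¹ = 1 := by rw [← hmul, mul_inv_cancel, tau_one τ hmul]
  exact eq_inv_of_mul_eq_one_left (by rw [← hmul, inv_mul_cancel, tau_one τ hmul])

private lemma tau_pow (τ : H → H) (hmul : ∀ a b, τ (a * b) = τ a * τ b) (a : H) (n : ℕ) :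
    τ (a ^ n) = (τ a) ^ n := by
  induction n with
  | zero => simpa using tau_one τ hmul
  | succ k ih => rw [pow_succ, hmul, ih, pow_succ]

/-- |H| = |H⁺| * |H⁻| for a finite group all of whose elements have odd order,
with an involutive endomorphism τ. -/
private lemma cardA [Finite H] (τ : H → H) (hmul : ∀ a b, τ (a * b) = τ a * τ b)
    (hτ : ∀ a, τ (τ a) = a) (hodd : ∀ a : H, Odd (orderOf a)) :
    Nat.card H = Nat.card {a : H // τ a = a} * Nat.card {a : H // τ a = a⁻¹} := by
  have hsqrt : ∀ b : H, τ b = b⁻¹ → ∃ c : H, τ c = c⁻¹ ∧ c * c = b := by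
    intro b hb
    obtain ⟨k, hk⟩ := hodd b
    refine ⟨b ^ (k + 1), ?_, ?_⟩
    · rw [tau_pow τ hmul, hb, inv_pow]
    · rw [← pow_add]
      have h2 : k + 1 + (k + 1) = orderOf b + 1 := by omega
      rw [h2, pow_succ, pow_orderOf_eq_one, one_mul]
  choose s hs1 hs2 using fun b : {a : H // τ a = a⁻¹} => hsqrt b.1 b.2
  set F : {a : H // τ a = a⁻¹} × {a : H // τ a = a} → H := fun p => s p.1 * p.2.1 with hF
  have key : ∀ p, (F p) * (τ (F p))⁻¹ = p.1.1 := by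
    rintro ⟨b, g⟩
    have h1 : τ (F ⟨b, g⟩) = (s b)⁻¹ * g.1 := by
      simp only [hF, hmul, hs1, g.2]
    rw [h1, mul_inv_rev, inv_inv]
    calc s b * g.1 * (g.1⁻¹ * s b) = s b * s b := by group
      _ = b.1 := hs2 b
  have hbij : Function.Bijective F := by
    constructor
    · rintro ⟨b, g⟩ ⟨b', g'⟩ h
      have hb : b = b' := Subtype.ext (by rw [← key ⟨b, g⟩, ← key ⟨b', g'⟩, h])
      subst hb
      have hg : g.1 = g'.1 := mul_left_cancel h
      exact Prod.ext rfl (Subtype.ext hg)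
    · intro a
      have hb : τ (a * (τ a)⁻¹) = (a * (τ a)⁻¹)⁻¹ := by
        rw [hmul, tau_inv τ hmul, hτ, mul_inv_rev, inv_inv]
      set b : {x : H // τ x = x⁻¹} := ⟨a * (τ a)⁻¹, hb⟩ with hbdef
      have h2 : s b * s b = a * (τ a)⁻¹ := hs2 b
      have hg : τ ((s b)⁻¹ * a) = (s b)⁻¹ * a := by
        rw [hmul, tau_inv τ hmul, hs1, inv_inv, eq_inv_mul_iff_mul_eq, ← mul_assoc, h2]
        group
      refine ⟨⟨b, ⟨(s b)⁻¹ * a, hg⟩⟩, ?_⟩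
      simp only [hF]
      group
  rw [mul_comm, ← Nat.card_prod]
  exact (Nat.card_eq_of_bijective F hbij).symm

/-- The even-part counting for quotients. -/
private lemma cardB [Finite H] (σ : H → H) (hmul : ∀ a b, σ (a * b) = σ a * σ b)
    (hσ : ∀ a, σ (σ a) = a) (hodd : ∀ a : H, Odd (orderOf a))
    (N : Subgroup H) [N.Normal] (hNσ : ∀ a, σ a ∈ N ↔ a ∈ N)
    (σbar : H ⧸ N → H ⧸ N) (hσbar : ∀ g : H, σbar (g : H ⧸ N) = ((σ g : H) : H ⧸ N)) :
    Nat.card {a : H // σ a = a} =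
      Nat.card {x : H ⧸ N // σbar x = x} * Nat.card {a : H // a ∈ N ∧ σ a = a} := by
  have hsec : ∀ x : H ⧸ N, σbar x = x → ∃ g : H, σ g = g ∧ (g : H ⧸ N) = x := by
    intro x hx
    obtain ⟨g₀, rfl⟩ := QuotientGroup.mk_surjective x
    rw [hσbar] at hx
    have hn : g₀⁻¹ * σ g₀ ∈ N := QuotientGroup.eq.mp hx.symm
    set n := g₀⁻¹ * σ g₀ with hn_def
    have hσg : σ g₀ = g₀ * n := by rw [hn_def]; group
    have hσn : σ n = n⁻¹ := by
      rw [hn_def, hmul, tau_inv σ hmul, hσ, mul_inv_rev, inv_inv]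
    obtain ⟨k, hk⟩ := hodd n
    have hpowmem : (n ^ (k + 1))⁻¹ ∈ N := inv_mem (pow_mem hn (k + 1))
    refine ⟨g₀ * n ^ (k + 1), ?_, ?_⟩
    · rw [hmul, tau_pow σ hmul, hσg, hσn, inv_pow]
      have h3 : n * (n ^ (k + 1))⁻¹ = n ^ (k + 1) := by
        rw [mul_inv_eq_iff_eq_mul, ← pow_add]
        have h2 : k + 1 + (k + 1) = orderOf n + 1 := by omega
        rw [h2, pow_succ, pow_orderOf_eq_one, one_mul]
      rw [mul_assoc, h3]
    · rw [QuotientGroup.eq]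
      simpa [mul_inv_rev, mul_assoc] using hpowmem
  choose s hs1 hs2 using fun x : {x : H ⧸ N // σbar x = x} => hsec x.1 x.2
  set F : {x : H ⧸ N // σbar x = x} × {a : H // a ∈ N ∧ σ a = a} → {a : H // σ a = a} :=
    fun p => ⟨s p.1 * p.2.1, by rw [hmul, hs1, p.2.2.2]⟩ with hF
  have hclass : ∀ p : {x : H ⧸ N // σbar x = x} × {a : H // a ∈ N ∧ σ a = a},
      ((F p).1 : H ⧸ N) = p.1.1 := by
    rintro ⟨x, a⟩
    have : ((s x * a.1 : H) : H ⧸ N) = ((s x : H) : H ⧸ N) := by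
      rw [QuotientGroup.eq]
      simpa [mul_inv_rev, mul_assoc] using a.2.1
    simpa [hF, this] using hs2 x
  have hbij : Function.Bijective F := by
    constructor
    · rintro ⟨x, a⟩ ⟨x', a'⟩ h
      have hval : s x * a.1 = s x' * a'.1 := congrArg Subtype.val h
      have hx : x = x' := by
        have := hclass ⟨x, a⟩
        have h2 := hclass ⟨x', a'⟩
        rw [h] at this
        exact Subtype.ext (by rw [← this, ← h2])
      subst hx
      exact Prod.ext rfl (Subtype.ext (mul_left_cancel hval))
    · rintro ⟨b, hb⟩
      set x : {x : H ⧸ N // σbar x = x} := ⟨(b : H ⧸ N), by rw [hσbar, hb]⟩ with hxdef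
      have hmem : (s x)⁻¹ * b ∈ N := QuotientGroup.eq.mp (hs2 x)
      have hfix : σ ((s x)⁻¹ * b) = (s x)⁻¹ * b := by
        rw [hmul, tau_inv σ hmul, hs1, hb]
      refine ⟨⟨x, ⟨(s x)⁻¹ * b, hmem, hfix⟩⟩, ?_⟩
      apply Subtype.ext
      simp only [hF]
      group
  rw [← Nat.card_prod]
  exact (Nat.card_eq_of_bijective F hbij).symm

end Aux

/-- Let `G` be a `σ`-`p`-group, `N ⊴ G` a `σ`-invariant normal
subgroup, and `ε ∈ {+1, −1}`. Then `|G^ε| = |(G/N)^ε| · |N^ε|`. Here `σbar` is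
the automorphism of `G/N` induced by `σ`. -/
theorem sigma_p_group_card_parts_mul
    {p : ℕ} (hp : p.Prime) (hodd : Odd p)
    {G : Type*} [Group G] [Finite G] (hG : IsPGroup p G)
    (σ : G ≃* G) (hσ : ∀ a, σ (σ a) = a)
    (N : Subgroup G) [N.Normal] (hNσ : ∀ a, σ a ∈ N ↔ a ∈ N)
    (σbar : G ⧸ N →* G ⧸ N) (hσbar : ∀ g : G, σbar (g : G ⧸ N) = ((σ g : G) : G ⧸ N))
    (ε : ℤ) (hε : ε = 1 ∨ ε = -1) :
    Nat.card {a : G // σ a = a ^ ε} =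
      Nat.card {x : G ⧸ N // σbar x = x ^ ε} *
        Nat.card {a : G // a ∈ N ∧ σ a = a ^ ε} := by
  -- odd-order facts
  have hoddG : ∀ a : G, Odd (orderOf a) := oddOrd hodd hG
  have hoddN : ∀ a : N, Odd (orderOf a) := oddOrd hodd (hG.to_subgroup N)
  have hoddQ : ∀ a : G ⧸ N, Odd (orderOf a) := oddOrd hodd (hG.to_quotient N)
  have hmulσ : ∀ a b : G, σ (a * b) = σ a * σ b := map_mul σ
  -- the restriction of σ to N
  set τN : N → N := fun n => ⟨σ n.1, (hNσ n.1).mpr n.2⟩ with hτN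
  have hmulN : ∀ a b : N, τN (a * b) = τN a * τN b := fun a b =>
    Subtype.ext (map_mul σ a.1 b.1)
  have hτNinv : ∀ n : N, τN (τN n) = n := fun n => Subtype.ext (hσ n.1)
  -- σbar is an involution
  have hσbar2 : ∀ x : G ⧸ N, σbar (σbar x) = x := by
    intro x
    obtain ⟨g, rfl⟩ := QuotientGroup.mk_surjective x
    rw [hσbar, hσbar, hσ]
  -- main counting lemmas
  have eG := cardA (⇑σ) hmulσ hσ hoddG
  have eQ := cardA (⇑σbar) (map_mul σbar) hσbar2 hoddQ
  have eN := cardA τN hmulN hτNinv hoddN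
  have eB := cardB (⇑σ) hmulσ hσ hoddG N hNσ (⇑σbar) hσbar
  -- transfer N-counts to G-subtypes
  have eNp : Nat.card {n : N // τN n = n} = Nat.card {a : G // a ∈ N ∧ σ a = a} :=
    Nat.card_congr
      ⟨fun x => ⟨x.1.1, x.1.2, congrArg Subtype.val x.2⟩,
       fun y => ⟨⟨y.1, y.2.1⟩, Subtype.ext y.2.2⟩,
       fun x => Subtype.ext (Subtype.ext rfl), fun y => rfl⟩
  have eNm : Nat.card {n : N // τN n = n⁻¹} = Nat.card {a : G // a ∈ N ∧ σ a = a⁻¹} :=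
    Nat.card_congr
      ⟨fun x => ⟨x.1.1, x.1.2, congrArg Subtype.val x.2⟩,
       fun y => ⟨⟨y.1, y.2.1⟩, Subtype.ext y.2.2⟩,
       fun x => Subtype.ext (Subtype.ext rfl), fun y => rfl⟩
  have eTot : Nat.card G = Nat.card (G ⧸ N) * Nat.card N :=
    Subgroup.card_eq_card_quotient_mul_card_subgroup N
  rcases hε with rfl | rfl
  · simp only [zpow_one]
    exact eB
  · simp only [zpow_neg_one]
    haveI : Nonempty {a : G // σ a = a} := ⟨⟨1, map_one σ⟩⟩
    have hGpos : 0 < Nat.card {a : G // σ a = a} := Nat.card_pos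
    have main : Nat.card {a : G // σ a = a} * Nat.card {a : G // σ a = a⁻¹} =
        Nat.card {a : G // σ a = a} *
          (Nat.card {x : G ⧸ N // σbar x = x⁻¹} *
            Nat.card {a : G // a ∈ N ∧ σ a = a⁻¹}) := by
      rw [← eG, eTot, eQ, eN, eNp, eNm, eB]; ring
    exact Nat.eq_of_mul_eq_mul_left hGpos main
end

section
/- Let G be a σ-p-group. Then the product maps G⁺ × G⁻ → G, (a,b) ↦ ab, and G⁻ × G⁺ → G, (a,b) ↦ ab, are both bijections. -/
/-- Let `G` be a `σ`-`p`-group. Then the product maps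
`G⁺ × G⁻ → G, (a,b) ↦ ab` and `G⁻ × G⁺ → G, (a,b) ↦ ab` are both bijections. -/
theorem sigma_p_group_mul_bijective
    {p : ℕ} (hp : p.Prime) (hodd : Odd p)
    {G : Type*} [Group G] [Finite G] (hG : IsPGroup p G)
    (σ : G ≃* G) (hσ : ∀ a, σ (σ a) = a) :
    Function.Bijective
      (fun x : {a : G // σ a = a} × {a : G // σ a = a⁻¹} => (x.1 : G) * (x.2 : G)) ∧
    Function.Bijective
      (fun x : {a : G // σ a = a⁻¹} × {a : G // σ a = a} => (x.1 : G) * (x.2 : G)) := by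
  have hcard : Odd (Nat.card G) := by
    haveI := Fact.mk hp
    obtain ⟨n, hn⟩ := hG.exists_card_eq
    rw [hn]; exact hodd.pow
  obtain ⟨m, hm⟩ := hcard
  set n := Nat.card G with hn
  set k := (n + 1) / 2 with hk
  have h2k : k * 2 = n + 1 := by omega
  have hpowk : ∀ c : G, c ^ (n + 1) = c := by
    intro c
    rw [pow_succ, pow_card_eq_one', one_mul]
  have hsq : ∀ c : G, (c ^ k) ^ 2 = c := by
    intro c
    rw [← pow_mul, h2k, hpowk]
  have hinj : ∀ b b' : G, b ^ 2 = b' ^ 2 → b = b' := by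
    intro b b' h
    have e1 : b = (b ^ 2) ^ k := by rw [← pow_mul, mul_comm, h2k, hpowk]
    have e2 : b' = (b' ^ 2) ^ k := by rw [← pow_mul, mul_comm, h2k, hpowk]
    rw [e1, e2, h]
  constructor
  · constructor
    · rintro ⟨⟨a, ha⟩, ⟨b, hb⟩⟩ ⟨⟨a', ha'⟩, ⟨b', hb'⟩⟩ h
      simp only at h
      have h2 : a * b⁻¹ = a' * b'⁻¹ := by
        have := congrArg σ h
        simpa [map_mul, ha, hb, ha', hb'] using this
      have hbb : b = b' := by
        apply hinj
        calc b ^ 2 = (a * b⁻¹)⁻¹ * (a * b) := by rw [pow_two]; group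
        _ = (a' * b'⁻¹)⁻¹ * (a' * b') := by rw [h, h2]
        _ = b' ^ 2 := by rw [pow_two]; group
      have haa : a = a' := by
        subst hbb
        exact mul_right_cancel h
      simp [Prod.ext_iff, Subtype.ext_iff, haa, hbb]
    · intro g
      set c := (σ g)⁻¹ * g with hc
      have hcc : σ c = c⁻¹ := by
        simp [hc, map_mul, hσ, mul_inv_rev]
      refine ⟨⟨⟨g * (c ^ k)⁻¹, ?_⟩, ⟨c ^ k, ?_⟩⟩, ?_⟩
      · have key : σ g * (c ^ k * c ^ k) = g := by
          have : c ^ k * c ^ k = (σ g)⁻¹ * g := by rw [← pow_two, hsq]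
          rw [this, mul_inv_cancel_left]
        have : σ (g * (c ^ k)⁻¹) = σ g * c ^ k := by
          rw [map_mul, map_inv, map_pow, hcc, inv_pow, inv_inv]
        rw [this, eq_mul_inv_iff_mul_eq, mul_assoc, key]
      · rw [map_pow, hcc, inv_pow]
      · simp
  · constructor
    · rintro ⟨⟨b, hb⟩, ⟨a, ha⟩⟩ ⟨⟨b', hb'⟩, ⟨a', ha'⟩⟩ h
      simp only at h
      have h2 : b⁻¹ * a = b'⁻¹ * a' := by
        have := congrArg σ h
        simpa [map_mul, ha, hb, ha', hb'] using this
      have hbb : b = b' := by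
        apply hinj
        calc b ^ 2 = (b * a) * (b⁻¹ * a)⁻¹ := by rw [pow_two]; group
        _ = (b' * a') * (b'⁻¹ * a')⁻¹ := by rw [h, h2]
        _ = b' ^ 2 := by rw [pow_two]; group
      have haa : a = a' := by
        subst hbb
        exact mul_left_cancel h
      simp [Prod.ext_iff, Subtype.ext_iff, haa, hbb]
    · intro g
      set c := g * (σ g)⁻¹ with hc
      have hcc : σ c = c⁻¹ := by
        simp [hc, map_mul, hσ, mul_inv_rev]
      refine ⟨⟨⟨c ^ k, ?_⟩, ⟨(c ^ k)⁻¹ * g, ?_⟩⟩, ?_⟩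
      · rw [map_pow, hcc, inv_pow]
      · have key : (c ^ k * c ^ k) * σ g = g := by
          have : c ^ k * c ^ k = g * (σ g)⁻¹ := by rw [← pow_two, hsq]
          rw [this, inv_mul_cancel_right]
        have : σ ((c ^ k)⁻¹ * g) = c ^ k * σ g := by
          rw [map_mul, map_inv, map_pow, hcc, inv_pow, inv_inv]
        rw [this, eq_inv_mul_iff_mul_eq, ← mul_assoc, key]
      · simp
end

section
/- Let G be a σ-p-group. Then |G| = |G⁺| · |G⁻|. -/
/-!
The map `a ↦ a * (σ a)⁻¹` sends `G` into `G⁻`, and two elements have the same image exactly when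
they lie in the same left coset of the subgroup `G⁺`. When `|G|` is odd, squaring is a bijection
of `G` given by a power map, so for `c ∈ G⁻` its square root `a` also lies in `G⁻`, and then
`a * (σ a)⁻¹ = a ^ 2 = c`.
Hence `G ⧸ G⁺ ≃ G⁻`, and Lagrange's theorem gives `|G| = |G⁺| · |G⁻|`.
A `p`-group with `p` odd has odd order by Cauchy's theorem.
-/

theorem IsPGroup.odd_card {p : ℕ} {G : Type*} [Group G] [Finite G] (hG : IsPGroup p G)
    (hp : Odd p) : Odd (Nat.card G) := by
  by_contra hcard
  rw [Nat.not_odd_iff_even, even_iff_two_dvd] at hcard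
  obtain ⟨g, hg⟩ := exists_prime_orderOf_dvd_card' 2 hcard
  obtain ⟨k, hk⟩ := hG g
  have h2 : 2 ∣ p ^ k := hg ▸ orderOf_dvd_of_pow_eq_one hk
  exact hp.pow.not_two_dvd_nat h2

namespace MulEquiv

variable {G : Type*} [Group G] {σ : G ≃* G}

variable (σ) in
def fixedSubgroup : Subgroup G := (σ : G →* G).eqLocus (MonoidHom.id G)

theorem mem_fixedSubgroup {a : G} : a ∈ σ.fixedSubgroup ↔ σ a = a := Iff.rfl

theorem mul_inv_apply_eq_mul_inv_apply_iff {a b : G} :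
    a * (σ a)⁻¹ = b * (σ b)⁻¹ ↔ a⁻¹ * b ∈ σ.fixedSubgroup := by
  rw [mem_fixedSubgroup, map_mul, map_inv, mul_inv_eq_iff_eq_mul, mul_assoc,
    ← inv_mul_eq_iff_eq_mul, ← inv_inj, mul_inv_rev, mul_inv_rev, inv_inv, inv_inv, eq_comm]

theorem apply_mul_inv_apply (hσ : Function.Involutive σ) (a : G) :
    σ (a * (σ a)⁻¹) = (a * (σ a)⁻¹)⁻¹ := by
  rw [map_mul, map_inv, hσ, mul_inv_rev, inv_inv]

def quotientFixedSubgroupToInverted (hσ : Function.Involutive σ) :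
    G ⧸ σ.fixedSubgroup → {a : G // σ a = a⁻¹} :=
  Quotient.lift (fun a ↦ ⟨a * (σ a)⁻¹, apply_mul_inv_apply hσ a⟩) fun _ _ h ↦
    Subtype.ext (mul_inv_apply_eq_mul_inv_apply_iff.2 (QuotientGroup.leftRel_apply.1 h))

theorem quotientFixedSubgroupToInverted_injective (hσ : Function.Involutive σ) :
    Function.Injective (quotientFixedSubgroupToInverted hσ) := by
  rintro ⟨a⟩ ⟨b⟩ h
  exact QuotientGroup.eq.2 (mul_inv_apply_eq_mul_inv_apply_iff.1 (congrArg Subtype.val h))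

theorem quotientFixedSubgroupToInverted_surjective (hσ : Function.Involutive σ)
    (hG : Odd (Nat.card G)) : Function.Surjective (quotientFixedSubgroupToInverted hσ) := by
  rintro ⟨c, hc⟩
  have hcop : (Nat.card G).Coprime 2 := Nat.coprime_two_right.2 hG
  set a := (powCoprime hcop).symm c with ha_def
  have ha : σ a = a⁻¹ := by
    rw [ha_def, powCoprime_symm_apply, map_zpow, hc, inv_zpow]
  refine ⟨QuotientGroup.mk a, Subtype.ext ?_⟩
  change a * (σ a)⁻¹ = c
  rw [ha, inv_inv, ← sq]
  exact (powCoprime hcop).apply_symm_apply c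

theorem card_eq_card_fixed_mul_card_inverted (hσ : Function.Involutive σ)
    (hG : Odd (Nat.card G)) :
    Nat.card G = Nat.card {a : G // σ a = a} * Nat.card {a : G // σ a = a⁻¹} := by
  rw [σ.fixedSubgroup.card_eq_card_quotient_mul_card_subgroup, mul_comm,
    Nat.card_eq_of_bijective _ ⟨quotientFixedSubgroupToInverted_injective hσ,
      quotientFixedSubgroupToInverted_surjective hσ hG⟩]
  rfl

end MulEquiv

theorem sigma_p_group_card_eq_card_plus_mul_card_minus_general
    {p : ℕ} (hodd : Odd p)
    {G : Type*} [Group G] [Finite G] (hG : IsPGroup p G)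
    (σ : G ≃* G) (hσ : ∀ a, σ (σ a) = a) :
    Nat.card G = Nat.card {a : G // σ a = a} * Nat.card {a : G // σ a = a⁻¹} :=
  σ.card_eq_card_fixed_mul_card_inverted hσ (hG.odd_card hodd)

/-- Let `G` be a `σ`-`p`-group. Then `|G| = |G⁺| · |G⁻|`. -/
theorem sigma_p_group_card_eq_card_plus_mul_card_minus
    {p : ℕ} (hp : p.Prime) (hodd : Odd p)
    {G : Type*} [Group G] [Finite G] (hG : IsPGroup p G)
    (σ : G ≃* G) (hσ : ∀ a, σ (σ a) = a) :
    Nat.card G = Nat.card {a : G // σ a = a} * Nat.card {a : G // σ a = a⁻¹} :=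
  sigma_p_group_card_eq_card_plus_mul_card_minus_general hodd hG σ hσ
end

section
/- Let G be a σ-p-group, let ε ∈ {+1,−1}, and let a ∈ G be such that σ(a) is conjugate in G to a^ε. Then there exists b ∈ G^ε that is conjugate in G to a; moreover, any two elements of G^ε that are conjugate in G to a are conjugate to each other by an element of G⁺. -/
/-!
Put `τ x = σ(x)^ε`; since `ε² = 1` and `σ` is an involution, `τ` is an involution, and the
hypothesis on `a` makes it preserve the conjugacy class of `a`. That class has `p`-power, hence
odd, size, so `τ` fixes some `b` in it, i.e. `σ b = b^ε`. For uniqueness, if `g b g⁻¹ = b'` then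
`c = g⁻¹ σ(g)` satisfies `σ c = c⁻¹` and centralises `b`. As `c` has odd order it has a square
root `e` among its powers, and `d = g e` is `σ`-fixed and still conjugates `b` to `b'`.
-/

open Function

section Group

variable {G : Type*} [Group G]

theorem IsConj.zpow {a b : G} (n : ℤ) (h : IsConj a b) :
    IsConj (a ^ n) (b ^ n) := by
  obtain ⟨c, rfl⟩ := isConj_iff.1 h
  exact isConj_iff.2 ⟨c, conj_zpow.symm⟩

theorem zpow_zpow_of_mul_self_eq_one {ε : ℤ} (hε : ε * ε = 1) (x : G) :
    (x ^ ε) ^ ε = x := by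
  rw [← zpow_mul, hε, zpow_one]

theorem commute_inv_mul_of_conj_eq {g₁ g₂ x : G}
    (h : g₁ * x * g₁⁻¹ = g₂ * x * g₂⁻¹) : Commute (g₁⁻¹ * g₂) x :=
  calc g₁⁻¹ * g₂ * x = g₁⁻¹ * (g₂ * x * g₂⁻¹) * g₂ := by group
    _ = g₁⁻¹ * (g₁ * x * g₁⁻¹) * g₂ := by rw [h]
    _ = x * (g₁⁻¹ * g₂) := by group

end Group

theorem exists_pow_sq_eq_self_of_odd_orderOf {G : Type*} [Monoid G] {c : G}
    (h : Odd (orderOf c)) : ∃ k : ℕ, (c ^ k) ^ 2 = c := by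
  obtain ⟨m, hm⟩ := h
  refine ⟨m + 1, ?_⟩
  rw [← pow_mul, show (m + 1) * 2 = orderOf c + 1 by omega, pow_succ, pow_orderOf_eq_one, one_mul]

theorem Function.Involutive.exists_fixed_point_of_odd_card {α : Type*} [Finite α] {f : α → α}
    (hf : Involutive f) (h : Odd (Nat.card α)) : ∃ x, f x = x := by
  have := Fintype.ofFinite α
  refine Equiv.Perm.exists_fixed_point_of_prime (p := 2) (n := 1) (σ := hf.toPerm) ?_ ?_
  · rw [← Nat.card_eq_fintype_card]
    exact h.not_two_dvd_nat
  · ext x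
    simp [sq, hf x]

namespace IsPGroup

variable {p : ℕ} {G : Type*} [Group G]

theorem odd_orderOf (hG : IsPGroup p G) (hp : Odd p) (g : G) : Odd (orderOf g) := by
  obtain ⟨k, hk⟩ := hG g
  exact hp.pow.of_dvd_nat (orderOf_dvd_of_pow_eq_one hk)

theorem card_conjugatesOf [Fact p.Prime] [Finite G] (hG : IsPGroup p G) (a : G) :
    ∃ n : ℕ, Nat.card (conjugatesOf a) = p ^ n := by
  have horbit : conjugatesOf a = MulAction.orbit (ConjAct G) a := by
    ext x
    rw [ConjAct.mem_orbit_conjAct, isConj_comm]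
    rfl
  rw [horbit]
  exact (hG.of_equiv ConjAct.toConjAct).card_orbit a

end IsPGroup

section Twisted

variable {G : Type*} [Group G] (σ : G →* G) {ε : ℤ}

theorem exists_map_eq_zpow_isConj_of_odd_card [Finite G] (hσ : Involutive σ) (hε : ε * ε = 1)
    {a : G} (ha : IsConj (σ a) (a ^ ε)) (hcard : Odd (Nat.card (conjugatesOf a))) :
    ∃ b, σ b = b ^ ε ∧ IsConj a b := by
  have hτ (x : conjugatesOf a) : (σ x) ^ ε ∈ conjugatesOf a := by
    have hx : IsConj (σ a) (σ x) := σ.map_isConj x.2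
    show IsConj a _
    simpa only [zpow_zpow_of_mul_self_eq_one hε] using ((ha.symm.trans hx).zpow ε)
  let τ : conjugatesOf a → conjugatesOf a := fun x => ⟨(σ x) ^ ε, hτ x⟩
  have hτinv : Involutive τ := fun x => Subtype.ext <| by
    simp only [τ, map_zpow, hσ x, zpow_zpow_of_mul_self_eq_one hε]
  obtain ⟨⟨b, hab⟩, hb⟩ := hτinv.exists_fixed_point_of_odd_card hcard
  refine ⟨b, ?_, hab⟩
  have hfix : (σ b) ^ ε = b := congrArg Subtype.val hb
  simpa only [zpow_zpow_of_mul_self_eq_one hε] using congrArg (· ^ ε) hfix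

theorem exists_map_eq_self_conj_eq_of_odd_orderOf (hσ : Involutive σ) (hε : ε * ε = 1)
    (hodd : ∀ c : G, Odd (orderOf c)) {b b' g : G} (hb : σ b = b ^ ε) (hb' : σ b' = b' ^ ε)
    (hg : g * b * g⁻¹ = b') : ∃ d, σ d = d ∧ d * b * d⁻¹ = b' := by
  set c := g⁻¹ * σ g
  have hσc : σ c = c⁻¹ := by simp [c, hσ g]
  have hcb : Commute c b := by
    have hconj : g * b ^ ε * g⁻¹ = σ g * b ^ ε * (σ g)⁻¹ := by
      rw [← conj_zpow, hg, ← hb', ← hg, map_mul, map_mul, map_inv, hb]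
    simpa only [zpow_zpow_of_mul_self_eq_one hε] using
      (commute_inv_mul_of_conj_eq hconj).zpow_right ε
  obtain ⟨k, hk⟩ := exists_pow_sq_eq_self_of_odd_orderOf (hodd c)
  set e := c ^ k
  have hσe : σ e = e⁻¹ := by rw [map_pow, hσc, inv_pow]
  have heb : e * b * e⁻¹ = b := by rw [(hcb.pow_left k).eq, mul_inv_cancel_right]
  refine ⟨g * e, ?_, ?_⟩
  · calc σ (g * e) = g * c * e⁻¹ := by rw [map_mul, hσe, mul_inv_cancel_left]
      _ = g * e := by rw [← hk, sq, ← mul_assoc, mul_inv_cancel_right]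
  · calc g * e * b * (g * e)⁻¹ = g * (e * b * e⁻¹) * g⁻¹ := by group
      _ = b' := by rw [heb, hg]

end Twisted

/-- Let `G` be a `σ`-`p`-group, `ε ∈ {+1, −1}`, and `a ∈ G`
with `σ(a)` conjugate in `G` to `a^ε`. Then there exists `b ∈ G^ε` conjugate in
`G` to `a`; moreover any two elements of `G^ε` that are conjugate in `G` to `a`
are conjugate to each other by an element of `G⁺`. -/
theorem sigma_p_group_conj_to_part
    {p : ℕ} (hp : p.Prime) (hodd : Odd p)
    {G : Type*} [Group G] [Finite G] (hG : IsPGroup p G)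
    (σ : G ≃* G) (hσ : ∀ a, σ (σ a) = a)
    (ε : ℤ) (hε : ε = 1 ∨ ε = -1)
    (a : G) (ha : IsConj (σ a) (a ^ ε)) :
    (∃ b : G, σ b = b ^ ε ∧ IsConj a b) ∧
    ∀ b b' : G, σ b = b ^ ε → σ b' = b' ^ ε → IsConj a b → IsConj a b' →
      ∃ d : G, σ d = d ∧ d * b * d⁻¹ = b' := by
  have : Fact p.Prime := ⟨hp⟩
  have hε2 : ε * ε = 1 := by rcases hε with rfl | rfl <;> rfl
  obtain ⟨n, hn⟩ := hG.card_conjugatesOf a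
  refine ⟨exists_map_eq_zpow_isConj_of_odd_card σ.toMonoidHom hσ hε2 ha (hn ▸ hodd.pow),
    fun b b' hb hb' hab hab' => ?_⟩
  obtain ⟨g, hg⟩ := isConj_iff.1 (hab.symm.trans hab')
  exact exists_map_eq_self_conj_eq_of_odd_orderOf σ.toMonoidHom hσ hε2 (hG.odd_orderOf hodd)
    hb hb' hg
end

section
/- Let G be a σ-p-group. Then for every a ∈ G there exist b ∈ G⁺ and c ∈ G with b = c · a · σ(c)⁻¹. (Equivalently, the element aσ is conjugate to bσ in the semidirect product G ⋊ {1,σ}, since conjugating aσ by c ∈ G yields (c·a·σ(c)⁻¹)σ.) -/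
private lemma orderOf_odd_of_pgroup {p : ℕ} (hp : p.Prime) (hodd : Odd p)
    {G : Type*} [Group G] (hG : IsPGroup p G) (g : G) : Odd (orderOf g) := by
  obtain ⟨n, hn⟩ := hG g
  have hdvd : orderOf g ∣ p ^ n := orderOf_dvd_of_pow_eq_one hn
  have hpn : Odd (p ^ n) := hodd.pow
  rcases Nat.even_or_odd (orderOf g) with h | h
  · have h2 : (2 : ℕ) ∣ p ^ n := dvd_trans h.two_dvd hdvd
    rw [Nat.odd_iff] at hpn
    omega
  · exact h

private lemma conj_pow'' {G : Type*} [Group G] (x y : G) (n : ℕ) :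
    (x⁻¹ * y * x) ^ n = x⁻¹ * y ^ n * x := by
  induction n with
  | zero => group
  | succ n ih => rw [pow_succ, ih, pow_succ]; group

/-- Let `G` be a `σ`-`p`-group. Then for every `a ∈ G` there
exist `b ∈ G⁺` and `c ∈ G` with `b = c * a * σ(c)⁻¹` (i.e. `aσ` is conjugate to
`bσ` in the semidirect product `G ⋊ {1, σ}`). -/
theorem sigma_p_group_twisted_conj_to_plus
    {p : ℕ} (hp : p.Prime) (hodd : Odd p)
    {G : Type*} [Group G] [Finite G] (hG : IsPGroup p G)
    (σ : G ≃* G) (hσ : ∀ a, σ (σ a) = a) :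
    ∀ a : G, ∃ b c : G, σ b = b ∧ b = c * a * (σ c)⁻¹ := by
  intro a
  set w : G := a * σ a with hw
  obtain ⟨t, ht⟩ := orderOf_odd_of_pgroup hp hodd hG w
  have hwk : w ^ (2 * t + 1) = 1 := by rw [← ht]; exact pow_orderOf_eq_one w
  have hσw : σ w = a⁻¹ * w * a := by
    rw [hw, map_mul, hσ]; group
  set b₀ : G := w ^ t * a with hb₀
  have hσb₀ : σ b₀ = a⁻¹ * w ^ (t + 1) := by
    rw [hb₀, map_mul, map_pow, hσw, conj_pow'']
    rw [show a⁻¹ * w ^ t * a * σ a = a⁻¹ * (w ^ t * (a * σ a)) by group, ← hw,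
      ← pow_succ]
  have hkey : b₀ * σ a * b₀ = a := by
    rw [hb₀]
    rw [show w ^ t * a * σ a * (w ^ t * a) = w ^ t * (a * σ a) * w ^ t * a by group,
      ← hw, ← pow_succ, ← pow_add]
    rw [show t + 1 + t = 2 * t + 1 by ring, hwk, one_mul]
  have hmul1 : b₀ * σ b₀ = 1 := by
    rw [hσb₀, hb₀,
      show w ^ t * a * (a⁻¹ * w ^ (t + 1)) = w ^ t * w ^ (t + 1) by group,
      ← pow_add, show t + (t + 1) = 2 * t + 1 by ring, hwk]
  have hinv : σ b₀ = b₀⁻¹ := (inv_eq_of_mul_eq_one_right hmul1).symm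
  obtain ⟨u, hu⟩ := orderOf_odd_of_pgroup hp hodd hG b₀
  have hbm : b₀ ^ (2 * u + 1) = 1 := by rw [← hu]; exact pow_orderOf_eq_one b₀
  set d : G := b₀ ^ (u + 1) with hd
  have hdd : d * d = b₀ := by
    rw [hd, ← pow_add, show u + 1 + (u + 1) = (2 * u + 1) + 1 by ring,
      pow_succ, hbm, one_mul]
  have hσd : σ d = d⁻¹ := by
    rw [hd, map_pow, hinv, inv_pow]
  refine ⟨d⁻¹ * a * d⁻¹, d⁻¹, ?_, ?_⟩
  · have hstep : σ (d⁻¹ * a * d⁻¹) = d * σ a * d := by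
      rw [map_mul, map_mul, map_inv, hσd, inv_inv]
    rw [hstep]
    have h2 : d * (d * σ a * d) * d = d * (d⁻¹ * a * d⁻¹) * d := by
      calc d * (d * σ a * d) * d = (d * d) * σ a * (d * d) := by group
      _ = a := by rw [hdd]; exact hkey
      _ = d * (d⁻¹ * a * d⁻¹) * d := by group
    exact mul_left_cancel (mul_right_cancel h2)
  · rw [map_inv, hσd, inv_inv]
end

section
/- Let G be a σ-p-group and let b, b' ∈ G⁺. If there exists c ∈ G with b' = c · b · σ(c)⁻¹, then there exists d ∈ G⁺ with b' = d · b · d⁻¹. (Equivalently: if bσ and b'σ are conjugate in the semidirect product G ⋊ {1,σ}, then b and b' are conjugate by an element of G⁺.) -/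
/-- Let `G` be a `σ`-`p`-group and `b, b' ∈ G⁺`. If
`b' = c * b * σ(c)⁻¹` for some `c ∈ G`, then `b' = d * b * d⁻¹` for some
`d ∈ G⁺` (i.e. if `bσ` and `b'σ` are conjugate in `G ⋊ {1, σ}`, then `b` and
`b'` are conjugate by an element of `G⁺`). -/
theorem sigma_p_group_twisted_conj_unique_up_to_plus
    {p : ℕ} (hp : p.Prime) (hodd : Odd p)
    {G : Type*} [Group G] [Finite G] (hG : IsPGroup p G)
    (σ : G ≃* G) (hσ : ∀ a, σ (σ a) = a)
    (b b' : G) (hb : σ b = b) (hb' : σ b' = b')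
    (h : ∃ c : G, b' = c * b * (σ c)⁻¹) :
    ∃ d : G, σ d = d ∧ b' = d * b * d⁻¹ := by
  obtain ⟨c, hc⟩ := h
  have hc2 : b' = σ c * b * c⁻¹ := by
    have := congrArg σ hc
    simpa [map_mul, map_inv, hb, hb', hσ] using this
  set u : G := (σ c)⁻¹ * c with hu
  have hcu : c = σ c * u := by simp [hu, mul_assoc]
  have hσu : σ u = u⁻¹ := by
    simp [hu, map_mul, map_inv, hσ, mul_inv_rev]
  have key : c * b * (σ c)⁻¹ = σ c * b * c⁻¹ := hc.symm.trans hc2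
  have hub : u * b * u = b := by
    calc u * b * u = (σ c)⁻¹ * (c * b * (σ c)⁻¹) * c := by
          simp [hu, mul_assoc]
      _ = (σ c)⁻¹ * (σ c * b * c⁻¹) * c := by rw [key]
      _ = b := by group
  have hconj : b⁻¹ * u * b = u⁻¹ := by
    have : u * b = b * u⁻¹ := by
      calc u * b = (u * b * u) * u⁻¹ := by group
        _ = b * u⁻¹ := by rw [hub]
    calc b⁻¹ * u * b = b⁻¹ * (u * b) := by rw [mul_assoc]
      _ = b⁻¹ * (b * u⁻¹) := by rw [this]
      _ = u⁻¹ := by group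
  -- order of u is odd
  obtain ⟨k, hk⟩ := hG u
  have hdvd : orderOf u ∣ p ^ k := orderOf_dvd_of_pow_eq_one hk
  have hoddn : Odd (orderOf u) := by
    rcases Nat.even_or_odd (orderOf u) with he | ho
    · exfalso
      have h2 : 2 ∣ p ^ k := dvd_trans he.two_dvd hdvd
      have : ¬ Even (p ^ k) := Nat.not_even_iff_odd.mpr (hodd.pow)
      exact this (even_iff_two_dvd.mpr h2)
    · exact ho
  set m : ℕ := (orderOf u + 1) / 2 with hm
  have h2m : 2 * m = orderOf u + 1 := by
    obtain ⟨j, hj⟩ := hoddn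
    omega
  set v : G := u ^ m with hv
  have hv2 : v * v = u := by
    calc v * v = u ^ (2 * m) := by rw [hv, ← pow_add, two_mul]
      _ = u ^ (orderOf u + 1) := by rw [h2m]
      _ = u ^ orderOf u * u := by rw [pow_succ]
      _ = u := by rw [pow_orderOf_eq_one, one_mul]
  have hvconj : b⁻¹ * v * b = v⁻¹ := by
    calc b⁻¹ * v * b = b⁻¹ * u ^ m * (b⁻¹)⁻¹ := by rw [hv, inv_inv]
      _ = (b⁻¹ * u * (b⁻¹)⁻¹) ^ m := (conj_pow).symm
      _ = (u⁻¹) ^ m := by rw [inv_inv, hconj]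
      _ = v⁻¹ := by rw [hv, inv_pow]
  have hσv : σ v = v⁻¹ := by rw [hv, map_pow, hσu, inv_pow]
  refine ⟨c * v⁻¹, ?_, ?_⟩
  · -- σ (c * v⁻¹) = c * v⁻¹
    have : σ (c * v⁻¹) = σ c * v := by
      rw [map_mul, map_inv, hσv, inv_inv]
    rw [this]
    calc σ c * v = σ c * (v * v) * v⁻¹ := by group
      _ = σ c * u * v⁻¹ := by rw [hv2]
      _ = c * v⁻¹ := by rw [← hcu]
  · -- b' = (c * v⁻¹) * b * (c * v⁻¹)⁻¹
    have hvb : v⁻¹ * b = b * v := by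
      have : v * b = b * v⁻¹ := by
        calc v * b = b * (b⁻¹ * v * b) := by group
          _ = b * v⁻¹ := by rw [hvconj]
      calc v⁻¹ * b = v⁻¹ * (b * v⁻¹) * v := by group
        _ = v⁻¹ * (v * b) * v := by rw [← this]
        _ = b * v := by group
    calc b' = c * b * (σ c)⁻¹ := hc
      _ = c * (b * u) * c⁻¹ := by
          rw [hu]; group
      _ = c * (b * (v * v)) * c⁻¹ := by rw [hv2]
      _ = c * ((v⁻¹ * b) * v) * c⁻¹ := by rw [hvb]; group
      _ = (c * v⁻¹) * b * (c * v⁻¹)⁻¹ := by group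
end

section
/- Let G be a σ-pro-p-group, let N be a σ-invariant closed normal subgroup of G, and let ε ∈ {+1,−1}. Then the projection G → G/N restricts to a surjective map G^ε → (G/N)^ε. -/
/-!
Write a coset `x` of `(G/N)^ε` as `g N`. The defect `c ∈ N` of `g` (`g⁻¹ σ(g)` for `ε = 1`,
`(g σ(g))⁻¹` for `ε = -1`) has a square root `d` in the closure of `⟨c⟩`, since `p` is odd and
`c ^ (p ^ n + 1) → c`. By continuity `σ` acts on that closure as it acts on `c`, namely by
inversion, resp. by conjugation with `σ(g)`, and then `g d`, resp. `d g`, is a lift of `x` in `G^ε`.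
-/

open Filter Topology

section ProP

variable {p : ℕ} {G : Type*} [Group G] [TopologicalSpace G] [IsTopologicalGroup G]
  [CompactSpace G]

theorem tendsto_pow_pow_nhds_one [TotallyDisconnectedSpace G]
    (hGpro : ∀ U : Subgroup G, U.Normal → IsOpen (U : Set G) → ∃ n : ℕ, U.index = p ^ n)
    (c : G) : Tendsto (fun n : ℕ => c ^ p ^ n) atTop (𝓝 1) := by
  refine fun U hU => ?_
  obtain ⟨V, hVU, hVopen, hV1⟩ := mem_nhds_iff.mp hU
  obtain ⟨H, hHV⟩ := ProfiniteGrp.exist_openNormalSubgroup_sub_open_nhds_of_one hVopen hV1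
  obtain ⟨m, hm⟩ := hGpro H.toSubgroup H.isNormal' H.isOpen'
  have hcm : c ^ p ^ m ∈ H.toSubgroup := hm ▸ H.toSubgroup.pow_index_mem c
  refine mem_map.mpr (mem_atTop_sets.mpr ⟨m, fun n hn => ?_⟩)
  have hcn : c ^ p ^ n = (c ^ p ^ m) ^ p ^ (n - m) := by
    rw [← pow_mul, ← pow_add, Nat.add_sub_cancel' hn]
  exact hVU (hHV (show c ^ p ^ n ∈ H.toSubgroup from hcn ▸ pow_mem hcm _))

variable [T2Space G]

theorem exists_mul_self_eq_mem_closure_zpowers (hodd : Odd p) {c : G}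
    (hc : Tendsto (fun n : ℕ => c ^ p ^ n) atTop (𝓝 1)) :
    ∃ d ∈ closure (Subgroup.zpowers c : Set G), d * d = c := by
  set K := closure (Subgroup.zpowers c : Set G)
  have hsq_closed : IsClosed ((fun x => x * x) '' K) :=
    (isClosed_closure.isCompact.image (continuous_id.mul continuous_id)).isClosed
  have hsq_mem : ∀ n : ℕ, c ^ (p ^ n + 1) ∈ (fun x => x * x) '' K := fun n => by
    obtain ⟨k, hk⟩ := (hodd.pow (n := n)).add_one
    exact ⟨c ^ k, subset_closure (Subgroup.npow_mem_zpowers c k), by simp only [← pow_add, ← hk]⟩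
  have hlim : Tendsto (fun n : ℕ => c ^ (p ^ n + 1)) atTop (𝓝 c) := by
    simpa [pow_succ] using hc.mul_const c
  exact hsq_closed.mem_of_tendsto hlim (Eventually.of_forall hsq_mem)

end ProP

theorem eq_of_mem_closure_zpowers {G : Type*} [Group G] [TopologicalSpace G] [T2Space G]
    {f g : G → G} (hf : Continuous f) (hg : Continuous g) {c : G}
    (hfg : ∀ k : ℤ, f (c ^ k) = g (c ^ k)) {d : G}
    (hd : d ∈ closure (Subgroup.zpowers c : Set G)) : f d = g d := by
  refine Set.EqOn.closure (fun y hy => ?_) hf hg hd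
  obtain ⟨k, rfl⟩ := Subgroup.mem_zpowers_iff.mp hy
  exact hfg k

section Involution

variable {p : ℕ} {G : Type*} [Group G] [TopologicalSpace G] [IsTopologicalGroup G]
  [CompactSpace G] [T2Space G] [TotallyDisconnectedSpace G] {σ : G ≃* G} {N : Subgroup G}

theorem exists_mem_map_mul_eq_self (hodd : Odd p)
    (hGpro : ∀ U : Subgroup G, U.Normal → IsOpen (U : Set G) → ∃ n : ℕ, U.index = p ^ n)
    (hσcont : Continuous σ) (hσ : ∀ a, σ (σ a) = a) (hNclosed : IsClosed (N : Set G))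
    {g : G} (hg : g⁻¹ * σ g ∈ N) :
    ∃ d ∈ N, σ (g * d) = g * d := by
  set c := g⁻¹ * σ g
  have hσc : σ c = c⁻¹ := by simp only [c, map_mul, map_inv, hσ, mul_inv_rev, inv_inv]
  obtain ⟨d, hdK, hdd⟩ :=
    exists_mul_self_eq_mem_closure_zpowers hodd (tendsto_pow_pow_nhds_one hGpro c)
  have hσd : σ d = d⁻¹ :=
    eq_of_mem_closure_zpowers hσcont continuous_inv
      (fun k => by rw [map_zpow, hσc, inv_zpow]) hdK
  refine ⟨d, closure_minimal (Subgroup.zpowers_le.mpr hg) hNclosed hdK, ?_⟩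
  have hσg : σ g = g * (d * d) := by rw [hdd, mul_inv_cancel_left]
  rw [map_mul, hσd, hσg]
  group

theorem exists_mem_map_mul_eq_inv (hodd : Odd p)
    (hGpro : ∀ U : Subgroup G, U.Normal → IsOpen (U : Set G) → ∃ n : ℕ, U.index = p ^ n)
    (hσcont : Continuous σ) (hσ : ∀ a, σ (σ a) = a) (hNclosed : IsClosed (N : Set G))
    {g : G} (hg : g * σ g ∈ N) :
    ∃ d ∈ N, σ (d * g) = (d * g)⁻¹ := by
  set c := (g * σ g)⁻¹
  have hσc : σ c = σ g * c * (σ g)⁻¹ := by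
    simp only [c, map_inv, map_mul, hσ, mul_inv_rev]
    group
  obtain ⟨d, hdK, hdd⟩ :=
    exists_mul_self_eq_mem_closure_zpowers hodd (tendsto_pow_pow_nhds_one hGpro c)
  have hσd : σ d = σ g * d * (σ g)⁻¹ :=
    eq_of_mem_closure_zpowers (f := σ) (g := fun y => σ g * y * (σ g)⁻¹) hσcont (by fun_prop)
      (fun k => by rw [map_zpow, hσc, conj_zpow]) hdK
  refine ⟨d, closure_minimal (Subgroup.zpowers_le.mpr (inv_mem hg)) hNclosed hdK, ?_⟩
  have hσg : σ g = g⁻¹ * (d * d)⁻¹ := by rw [hdd, inv_inv, inv_mul_cancel_left]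
  rw [map_mul, hσd, hσg]
  group

end Involution

theorem sigma_pro_p_group_quotient_parts_surjective_general
    {p : ℕ} (hodd : Odd p)
    {G : Type*} [Group G] [TopologicalSpace G] [IsTopologicalGroup G]
    [CompactSpace G] [T2Space G] [TotallyDisconnectedSpace G]
    (hGpro : ∀ U : Subgroup G, U.Normal → IsOpen (U : Set G) → ∃ n : ℕ, U.index = p ^ n)
    (σ : G ≃* G) (hσcont : Continuous σ) (hσ : ∀ a, σ (σ a) = a)
    (N : Subgroup G) [N.Normal] (hNclosed : IsClosed (N : Set G))
    (σbar : G ⧸ N →* G ⧸ N) (hσbar : ∀ g : G, σbar (g : G ⧸ N) = ((σ g : G) : G ⧸ N))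
    (ε : ℤ) (hε : ε = 1 ∨ ε = -1) :
    Set.MapsTo (fun g : G => (g : G ⧸ N)) {a : G | σ a = a ^ ε}
      {x : G ⧸ N | σbar x = x ^ ε} ∧
    Set.SurjOn (fun g : G => (g : G ⧸ N)) {a : G | σ a = a ^ ε}
      {x : G ⧸ N | σbar x = x ^ ε} := by
  refine ⟨fun a (ha : σ a = a ^ ε) => ?_, ?_⟩
  · change σbar a = (a : G ⧸ N) ^ ε
    rw [hσbar, ha, QuotientGroup.mk_zpow]
  intro x (hx : σbar x = x ^ ε)
  obtain ⟨g, rfl⟩ := QuotientGroup.mk_surjective x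
  rw [hσbar] at hx
  rcases hε with rfl | rfl
  · rw [zpow_one, eq_comm, QuotientGroup.eq] at hx
    obtain ⟨d, hdN, hfix⟩ := exists_mem_map_mul_eq_self hodd hGpro hσcont hσ hNclosed hx
    exact ⟨g * d, by simpa using hfix, QuotientGroup.mk_mul_of_mem g hdN⟩
  · rw [zpow_neg_one, ← QuotientGroup.mk_inv, QuotientGroup.eq, ← mul_inv_rev, inv_mem_iff] at hx
    obtain ⟨d, hdN, hinv⟩ := exists_mem_map_mul_eq_inv hodd hGpro hσcont hσ hNclosed hx
    refine ⟨d * g, by simpa using hinv, ?_⟩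
    change ((d * g : G) : G ⧸ N) = g
    rw [QuotientGroup.mk_mul, (QuotientGroup.eq_one_iff d).mpr hdN, one_mul]

/-- Let `G` be a `σ`-pro-`p`-group, `N` a `σ`-invariant closed
normal subgroup of `G`, and `ε ∈ {+1, −1}`. Then the projection `G → G/N`
restricts to a surjective map `G^ε → (G/N)^ε`. Here `σbar` is the automorphism
of `G/N` induced by `σ`. -/
theorem sigma_pro_p_group_quotient_parts_surjective
    {p : ℕ} (hp : p.Prime) (hodd : Odd p)
    {G : Type*} [Group G] [TopologicalSpace G] [IsTopologicalGroup G]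
    [CompactSpace G] [T2Space G] [TotallyDisconnectedSpace G]
    (hGpro : ∀ U : Subgroup G, U.Normal → IsOpen (U : Set G) → ∃ n : ℕ, U.index = p ^ n)
    (σ : G ≃* G) (hσcont : Continuous σ) (hσ : ∀ a, σ (σ a) = a)
    (N : Subgroup G) [N.Normal] (hNclosed : IsClosed (N : Set G))
    (hNσ : ∀ a, σ a ∈ N ↔ a ∈ N)
    (σbar : G ⧸ N →* G ⧸ N) (hσbar : ∀ g : G, σbar (g : G ⧸ N) = ((σ g : G) : G ⧸ N))
    (ε : ℤ) (hε : ε = 1 ∨ ε = -1) :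
    Set.MapsTo (fun g : G => (g : G ⧸ N)) {a : G | σ a = a ^ ε}
      {x : G ⧸ N | σbar x = x ^ ε} ∧
    Set.SurjOn (fun g : G => (g : G ⧸ N)) {a : G | σ a = a ^ ε}
      {x : G ⧸ N | σbar x = x ^ ε} :=
  sigma_pro_p_group_quotient_parts_surjective_general hodd hGpro σ hσcont hσ N hNclosed σbar hσbar ε
    hε
end

section
/- Let G be a σ-pro-p-group. Then the product maps G⁺ × G⁻ → G, (a,b) ↦ ab, and G⁻ × G⁺ → G, (a,b) ↦ ab, are both homeomorphisms. -/
/-! In a pro-`p` group with `p` odd, squaring is bijective: it is so in every finite quotient,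
and the open normal subgroups separate points while the image of squaring is compact.
Writing `g = a * b` with `a` even and `b` odd forces `σ(g)⁻¹ * g = b ^ 2`, so `b` is the unique
square root of `σ(g)⁻¹ * g`; conversely that square root is odd and `g * b⁻¹` is even. A
continuous bijection from a compact space to a Hausdorff one is a homeomorphism. -/

open Function

section Profinite

variable {G : Type*} [Group G] [TopologicalSpace G] [IsTopologicalGroup G] [CompactSpace G]
  [TotallyDisconnectedSpace G]

theorem IsClosed.mem_of_forall_openNormalSubgroup {S : Set G} (hS : IsClosed S) {g : G}
    (h : ∀ N : OpenNormalSubgroup G, ∃ s ∈ S, (s : G ⧸ (N : Subgroup G)) = g) : g ∈ S := by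
  by_contra hg
  have hU : IsOpen {x : G | g * x ∈ Sᶜ} :=
    hS.isOpen_compl.preimage (continuous_const_mul g)
  obtain ⟨N, hN⟩ := ProfiniteGrp.exist_openNormalSubgroup_sub_open_nhds_of_one hU (by simpa)
  obtain ⟨s, hs, hsg⟩ := h N
  have hmem : g⁻¹ * s ∈ (N : Subgroup G) := QuotientGroup.eq.mp hsg.symm
  exact (by simpa using hN hmem : s ∉ S) hs

theorem pow_bijective_of_coprime_index [T2Space G] (n : ℕ)
    (hindex : ∀ N : OpenNormalSubgroup G, (N : Subgroup G).index.Coprime n) :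
    Bijective fun x : G => x ^ n := by
  have h (N : OpenNormalSubgroup G) : (Nat.card (G ⧸ (N : Subgroup G))).Coprime n :=
    Subgroup.index_eq_card (N : Subgroup G) ▸ hindex N
  constructor
  · intro x y hxy
    refine (isClosed_singleton (x := y)).mem_of_forall_openNormalSubgroup fun N => ⟨y, rfl, ?_⟩
    apply (powCoprime (h N)).injective
    simp only [powCoprime_apply, ← QuotientGroup.mk_pow]
    exact congrArg _ hxy.symm
  · intro g
    refine (isCompact_range (continuous_pow n)).isClosed.mem_of_forall_openNormalSubgroup
      fun N => ?_
    obtain ⟨x, hx⟩ := QuotientGroup.mk_surjective ((powCoprime (h N)).symm g)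
    refine ⟨x ^ n, ⟨x, rfl⟩, ?_⟩
    rw [QuotientGroup.mk_pow, hx, ← powCoprime_apply (h N), Equiv.apply_symm_apply]

end Profinite

section Involution

variable {G : Type*} [Group G] (σ : G ≃* G)

theorem inv_map_mul_mul_eq_sq {a b : G} (ha : σ a = a) (hb : σ b = b⁻¹) :
    (σ (a * b))⁻¹ * (a * b) = b ^ 2 := by
  rw [map_mul, ha, hb, sq]
  group

theorem mul_even_odd_injective (hsq : Injective fun x : G => x ^ 2) :
    Injective fun x : {a : G // σ a = a} × {a : G // σ a = a⁻¹} => (x.1 : G) * x.2 := by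
  rintro ⟨⟨a, ha⟩, ⟨b, hb⟩⟩ ⟨⟨a', ha'⟩, ⟨b', hb'⟩⟩ (h : a * b = a' * b')
  obtain rfl : b = b' :=
    hsq (show b ^ 2 = b' ^ 2 by
      rw [← inv_map_mul_mul_eq_sq σ ha hb, ← inv_map_mul_mul_eq_sq σ ha' hb', h])
  obtain rfl : a = a' := mul_right_cancel h
  rfl

theorem mul_even_odd_surjective (hσ : ∀ a, σ (σ a) = a) (hsq : Bijective fun x : G => x ^ 2) :
    Surjective fun x : {a : G // σ a = a} × {a : G // σ a = a⁻¹} => (x.1 : G) * x.2 := by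
  intro g
  obtain ⟨b, hb⟩ := hsq.2 ((σ g)⁻¹ * g)
  have hb_odd : σ b = b⁻¹ := hsq.1 <| by
    simp only at hb ⊢
    rw [← map_pow, hb, map_mul, map_inv, hσ, inv_pow, hb, mul_inv_rev, inv_inv]
  have ha_even : σ (g * b⁻¹) = g * b⁻¹ := by
    rw [map_mul, map_inv, hb_odd, inv_inv, eq_mul_inv_iff_mul_eq, mul_assoc, ← sq]
    simp only at hb
    rw [hb, mul_inv_cancel_left]
  exact ⟨(⟨g * b⁻¹, ha_even⟩, ⟨b, hb_odd⟩), inv_mul_cancel_right g b⟩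

theorem mul_even_odd_bijective (hσ : ∀ a, σ (σ a) = a) (hsq : Bijective fun x : G => x ^ 2) :
    Bijective fun x : {a : G // σ a = a} × {a : G // σ a = a⁻¹} => (x.1 : G) * x.2 :=
  ⟨mul_even_odd_injective σ hsq.1, mul_even_odd_surjective σ hσ hsq⟩

/-- Inversion turns a factorisation `g = b * a` into `g⁻¹ = a⁻¹ * b⁻¹`, swapping the roles. -/
theorem mul_odd_even_bijective
    (h : Bijective fun x : {a : G // σ a = a} × {a : G // σ a = a⁻¹} => (x.1 : G) * x.2) :
    Bijective fun x : {a : G // σ a = a⁻¹} × {a : G // σ a = a} => (x.1 : G) * x.2 := by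
  have inv_even {a : G} (ha : σ a = a) : σ a⁻¹ = a⁻¹ := by rw [map_inv, ha]
  have inv_odd {b : G} (hb : σ b = b⁻¹) : σ b⁻¹ = b⁻¹⁻¹ := by rw [map_inv, hb]
  constructor
  · rintro ⟨⟨b, hb⟩, ⟨a, ha⟩⟩ ⟨⟨b', hb'⟩, ⟨a', ha'⟩⟩ (hba : b * a = b' * a')
    have := @h.1 (⟨a⁻¹, inv_even ha⟩, ⟨b⁻¹, inv_odd hb⟩) (⟨a'⁻¹, inv_even ha'⟩, ⟨b'⁻¹, inv_odd hb'⟩)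
      (by simp only [← mul_inv_rev, hba])
    simp only [Prod.mk.injEq, Subtype.mk.injEq, inv_inj] at this
    obtain ⟨rfl, rfl⟩ := this
    rfl
  · intro g
    obtain ⟨⟨⟨a, ha⟩, ⟨b, hb⟩⟩, hab⟩ := h.2 g⁻¹
    refine ⟨(⟨b⁻¹, inv_odd hb⟩, ⟨a⁻¹, inv_even ha⟩), ?_⟩
    simp only at hab ⊢
    rw [← mul_inv_rev, hab, inv_inv]

end Involution

theorem exists_homeomorph_mul_of_bijective {G : Type*} [Group G] [TopologicalSpace G]
    [ContinuousMul G] [CompactSpace G] [T2Space G] {P Q : G → Prop}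
    (hP : IsClosed {a | P a}) (hQ : IsClosed {a | Q a})
    (h : Bijective fun x : {a // P a} × {a // Q a} => (x.1 : G) * x.2) :
    ∃ e : ({a // P a} × {a // Q a}) ≃ₜ G, ∀ x, e x = (x.1 : G) * x.2 := by
  have : CompactSpace {a // P a} := isCompact_iff_compactSpace.mp hP.isCompact
  have : CompactSpace {a // Q a} := isCompact_iff_compactSpace.mp hQ.isCompact
  have hcont : Continuous fun x : {a // P a} × {a // Q a} => (x.1 : G) * x.2 := by fun_prop
  exact ⟨hcont.homeoOfEquivCompactToT2 (f := Equiv.ofBijective _ h), fun _ => rfl⟩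

theorem sigma_pro_p_group_mul_homeomorph_general
    {p : ℕ} (hodd : Odd p)
    {G : Type*} [Group G] [TopologicalSpace G] [IsTopologicalGroup G]
    [CompactSpace G] [T2Space G] [TotallyDisconnectedSpace G]
    (hGpro : ∀ U : Subgroup G, U.Normal → IsOpen (U : Set G) → ∃ n : ℕ, U.index = p ^ n)
    (σ : G ≃* G) (hσcont : Continuous σ) (hσ : ∀ a, σ (σ a) = a) :
    (∃ e : ({a : G // σ a = a} × {a : G // σ a = a⁻¹}) ≃ₜ G,
      ∀ x, e x = (x.1 : G) * (x.2 : G)) ∧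
    (∃ e : ({a : G // σ a = a⁻¹} × {a : G // σ a = a}) ≃ₜ G,
      ∀ x, e x = (x.1 : G) * (x.2 : G)) := by
  have hsq : Bijective fun x : G => x ^ 2 := pow_bijective_of_coprime_index 2 fun N => by
    obtain ⟨k, hk⟩ := hGpro N N.isNormal' N.isOpen'
    rw [hk]
    exact (Nat.coprime_two_right.mpr hodd).pow_left k
  have hbij := mul_even_odd_bijective σ hσ hsq
  have hEven : IsClosed {a | σ a = a} := isClosed_eq hσcont continuous_id
  have hOdd : IsClosed {a | σ a = a⁻¹} := isClosed_eq hσcont continuous_inv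
  exact ⟨exists_homeomorph_mul_of_bijective hEven hOdd hbij,
    exists_homeomorph_mul_of_bijective hOdd hEven (mul_odd_even_bijective σ hbij)⟩

/-- Let `G` be a `σ`-pro-`p`-group. Then the product maps
`G⁺ × G⁻ → G, (a,b) ↦ ab` and `G⁻ × G⁺ → G, (a,b) ↦ ab` are both
homeomorphisms. -/
theorem sigma_pro_p_group_mul_homeomorph
    {p : ℕ} (hp : p.Prime) (hodd : Odd p)
    {G : Type*} [Group G] [TopologicalSpace G] [IsTopologicalGroup G]
    [CompactSpace G] [T2Space G] [TotallyDisconnectedSpace G]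
    (hGpro : ∀ U : Subgroup G, U.Normal → IsOpen (U : Set G) → ∃ n : ℕ, U.index = p ^ n)
    (σ : G ≃* G) (hσcont : Continuous σ) (hσ : ∀ a, σ (σ a) = a) :
    (∃ e : ({a : G // σ a = a} × {a : G // σ a = a⁻¹}) ≃ₜ G,
      ∀ x, e x = (x.1 : G) * (x.2 : G)) ∧
    (∃ e : ({a : G // σ a = a⁻¹} × {a : G // σ a = a}) ≃ₜ G,
      ∀ x, e x = (x.1 : G) * (x.2 : G)) :=
  sigma_pro_p_group_mul_homeomorph_general hodd hGpro σ hσcont hσ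
end

section
/- Let G be a σ-pro-p-group. Then for every a ∈ G there exist b ∈ G⁺ and c ∈ G with b = c · a · σ(c)⁻¹; moreover, if b, b' ∈ G⁺ satisfy b' = c · b · σ(c)⁻¹ for some c ∈ G, then there exists d ∈ G⁺ with b' = d · b · d⁻¹. (Equivalently: every element aσ of the semidirect product G ⋊ {1,σ} is conjugate to bσ for some b ∈ G⁺, and this b is unique up to conjugation by G⁺.) -/
/-!
For odd `p`, squaring is a bijection of a pro-`p` group: it is one on every finite quotient, which
has odd order, so it is injective because open normal subgroups separate points, and its image is
dense and compact, hence all of `G`. Unique square roots are respected by every endomorphism `f`,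
so a square root of an element with `f x = x⁻¹` is again inverted by `f`; we use this for `f = σ`
and for conjugations.

Existence: if `v ^ 2 = σ a * a`, then `u = v * a⁻¹` satisfies `σ u = u⁻¹`, and so does its square
root `c`; then `c * a * (σ c)⁻¹ = c * a * c` is fixed by `σ`.
Uniqueness: if `b' = c * b * (σ c)⁻¹`, then `g = c⁻¹ * σ c` is inverted both by `σ` and by
conjugation with `b`, hence so is its square root `h`, and `d = c * h` is fixed by `σ` with
`b' = d * b * d⁻¹`.
-/

open Function

section SquareRoots

variable {G : Type*} [Group G]

lemma map_eq_of_map_sq_eq (hinj : Injective fun x : G => x ^ 2) (f : G →* G) {c d : G}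
    (h : f (c ^ 2) = d ^ 2) : f c = d :=
  hinj (by simpa only [map_pow] using h)

lemma map_eq_inv_of_sq_eq (hinj : Injective fun x : G => x ^ 2) (f : G →* G) {x c : G}
    (hx : f x = x⁻¹) (hc : c ^ 2 = x) : f c = c⁻¹ :=
  map_eq_of_map_sq_eq hinj f (by rw [hc, hx, ← hc, inv_pow])

theorem exists_fixed_twisted_conj (hsq : Bijective fun x : G => x ^ 2) (σ : G ≃* G)
    (hσ : ∀ a, σ (σ a) = a) (a : G) : ∃ b c : G, σ b = b ∧ b = c * a * (σ c)⁻¹ := by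
  obtain ⟨v, hv : v ^ 2 = σ a * a⟩ := hsq.2 (σ a * a)
  have hσa : σ a = v ^ 2 * a⁻¹ := by rw [hv]; group
  have hσv : σ v = a * v * a⁻¹ := by
    refine map_eq_of_map_sq_eq hsq.1 σ.toMonoidHom ?_
    rw [MulEquiv.coe_toMonoidHom, hv, map_mul, hσ, hσa]
    simp only [sq]
    group
  obtain ⟨c, hc : c ^ 2 = v * a⁻¹⟩ := hsq.2 (v * a⁻¹)
  have hσc : σ c = c⁻¹ := by
    refine map_eq_inv_of_sq_eq hsq.1 σ.toMonoidHom ?_ hc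
    rw [MulEquiv.coe_toMonoidHom, map_mul, map_inv, hσv, hσa]
    group
  have hv' : v = c ^ 2 * a := by rw [hc]; group
  refine ⟨c * a * (σ c)⁻¹, c, ?_, rfl⟩
  rw [map_mul, map_mul, map_inv, hσ, hσa, hσc, hv']
  simp only [sq]
  group

theorem exists_fixed_conj_of_twisted_conj (hsq : Bijective fun x : G => x ^ 2) (σ : G ≃* G)
    (hσ : ∀ a, σ (σ a) = a) {b b' c : G} (hb : σ b = b) (hb' : σ b' = b')
    (hc : b' = c * b * (σ c)⁻¹) : ∃ d : G, σ d = d ∧ b' = d * b * d⁻¹ := by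
  have hσcb : σ c * b = c * b * (σ c)⁻¹ * c := by
    rw [← hc, ← hb', hc, map_mul, map_mul, map_inv, hσ, hb]
    group
  obtain ⟨h, hh : h ^ 2 = c⁻¹ * σ c⟩ := hsq.2 (c⁻¹ * σ c)
  have hσh : σ h = h⁻¹ := by
    refine map_eq_inv_of_sq_eq hsq.1 σ.toMonoidHom ?_ hh
    rw [MulEquiv.coe_toMonoidHom, map_mul, map_inv, hσ]
    group
  have hbg : b⁻¹ * (c⁻¹ * σ c) * b = (c⁻¹ * σ c)⁻¹ := by
    rw [mul_assoc, mul_assoc, hσcb]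
    group
  have hbh : b⁻¹ * h * b = h⁻¹ := by
    simpa using map_eq_inv_of_sq_eq hsq.1 (MulAut.conj b⁻¹).toMonoidHom (by simpa using hbg) hh
  have hσc : σ c = c * h ^ 2 := by rw [hh]; group
  refine ⟨c * h, by rw [map_mul, hσh, hσc]; simp only [sq]; group, ?_⟩
  calc b' = c * b * h⁻¹ * h⁻¹ * c⁻¹ := by rw [hc, hσc]; simp only [sq]; group
    _ = c * b * (b⁻¹ * h * b) * h⁻¹ * c⁻¹ := by rw [hbh]
    _ = c * h * b * (c * h)⁻¹ := by group

lemma bijective_sq_quotient_of_odd_index (U : Subgroup G) [U.Normal] (hodd : Odd U.index) :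
    Bijective fun x : G ⧸ U => x ^ 2 :=
  Nat.Coprime.pow_left_bijective (Nat.coprime_two_right.2 hodd)

end SquareRoots

section Profinite

variable {G : Type*} [Group G] [TopologicalSpace G] [IsTopologicalGroup G] [CompactSpace G]
  [TotallyDisconnectedSpace G]

theorem injective_sq_of_odd_index (hodd : ∀ U : OpenNormalSubgroup G, Odd (U : Subgroup G).index) :
    Injective fun x : G => x ^ 2 := by
  intro x y hxy
  by_contra hne
  obtain ⟨U, hU⟩ := ProfiniteGrp.exist_openNormalSubgroup_sub_open_nhds_of_one
    isOpen_compl_singleton (Set.mem_compl_singleton_iff.2 (fun h => hne (inv_mul_eq_one.1 h.symm)))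
  have hxyU : (x : G ⧸ (U : Subgroup G)) = y :=
    (bijective_sq_quotient_of_odd_index (U : Subgroup G) (hodd U)).1 (by
      simp only [← QuotientGroup.mk_pow]; exact congrArg _ hxy)
  exact hU (QuotientGroup.eq.1 hxyU) rfl

theorem surjective_sq_of_odd_index [T2Space G]
    (hodd : ∀ U : OpenNormalSubgroup G, Odd (U : Subgroup G).index) :
    Surjective fun x : G => x ^ 2 := by
  have hclosed : IsClosed (Set.range fun x : G => x ^ 2) :=
    (isCompact_range (continuous_pow 2)).isClosed
  have hdense : Dense (Set.range fun x : G => x ^ 2) := by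
    refine dense_iff_inter_open.2 fun V hV ⟨g, hg⟩ => ?_
    obtain ⟨U, hU⟩ := ProfiniteGrp.exist_openNormalSubgroup_sub_open_nhds_of_one
      (hV.preimage (continuous_const_mul g)) (by simpa using hg)
    obtain ⟨y, hy⟩ :=
      (bijective_sq_quotient_of_odd_index (U : Subgroup G) (hodd U)).2 (g : G ⧸ (U : Subgroup G))
    obtain ⟨x, rfl⟩ := QuotientGroup.mk_surjective y
    have hgx : g⁻¹ * x ^ 2 ∈ (U : Subgroup G) := QuotientGroup.eq.1 (by simpa using hy.symm)
    exact ⟨x ^ 2, by simpa using hU hgx, x, rfl⟩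
  exact Set.range_eq_univ.1 (hclosed.closure_eq ▸ hdense.closure_eq)

end Profinite

theorem sigma_pro_p_group_twisted_conj_general
    {p : ℕ} (hodd : Odd p)
    {G : Type*} [Group G] [TopologicalSpace G] [IsTopologicalGroup G]
    [CompactSpace G] [T2Space G] [TotallyDisconnectedSpace G]
    (hGpro : ∀ U : Subgroup G, U.Normal → IsOpen (U : Set G) → ∃ n : ℕ, U.index = p ^ n)
    (σ : G ≃* G) (hσ : ∀ a, σ (σ a) = a) :
    (∀ a : G, ∃ b c : G, σ b = b ∧ b = c * a * (σ c)⁻¹) ∧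
    (∀ b b' : G, σ b = b → σ b' = b' → (∃ c : G, b' = c * b * (σ c)⁻¹) →
      ∃ d : G, σ d = d ∧ b' = d * b * d⁻¹) := by
  have hoddIndex : ∀ U : OpenNormalSubgroup G, Odd (U : Subgroup G).index := fun U => by
    obtain ⟨n, hn⟩ := hGpro U U.isNormal' U.isOpen'
    exact hn ▸ hodd.pow
  have hsq : Bijective fun x : G => x ^ 2 :=
    ⟨injective_sq_of_odd_index hoddIndex, surjective_sq_of_odd_index hoddIndex⟩
  exact ⟨exists_fixed_twisted_conj hsq σ hσ, fun b b' hb hb' ⟨c, hc⟩ =>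
    exists_fixed_conj_of_twisted_conj hsq σ hσ hb hb' hc⟩

/-- Let `G` be a `σ`-pro-`p`-group. Then every `a ∈ G` can be
written as `b = c * a * σ(c)⁻¹` with `b ∈ G⁺` and `c ∈ G` (i.e. `aσ` is
conjugate in `G ⋊ {1, σ}` to `bσ` with `b ∈ G⁺`); moreover if `b, b' ∈ G⁺`
satisfy `b' = c * b * σ(c)⁻¹` for some `c ∈ G`, then `b' = d * b * d⁻¹` for
some `d ∈ G⁺` (i.e. `b` is unique up to conjugation by `G⁺`). -/
theorem sigma_pro_p_group_twisted_conj
    {p : ℕ} (hp : p.Prime) (hodd : Odd p)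
    {G : Type*} [Group G] [TopologicalSpace G] [IsTopologicalGroup G]
    [CompactSpace G] [T2Space G] [TotallyDisconnectedSpace G]
    (hGpro : ∀ U : Subgroup G, U.Normal → IsOpen (U : Set G) → ∃ n : ℕ, U.index = p ^ n)
    (σ : G ≃* G) (hσcont : Continuous σ) (hσ : ∀ a, σ (σ a) = a) :
    (∀ a : G, ∃ b c : G, σ b = b ∧ b = c * a * (σ c)⁻¹) ∧
    (∀ b b' : G, σ b = b → σ b' = b' → (∃ c : G, b' = c * b * (σ c)⁻¹) →
      ∃ d : G, σ d = d ∧ b' = d * b * d⁻¹) :=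
  sigma_pro_p_group_twisted_conj_general hodd hGpro σ hσ
end

section
/- Let π : G → H be a surjective continuous σ-equivariant homomorphism of σ-pro-p-groups. Then the pushforward π_* μ_G equals μ_H, and the induced map π⁻ : G⁻ → H⁻ satisfies (π⁻)_* μ_{G⁻} = μ_{H⁻}. -/
/-!
`π_* μ_G` is a left-invariant probability measure on `H`, hence equals `μ_H` by uniqueness of
Haar measure. Since `π` is `σ`-equivariant it maps the factorisation `g = g⁺ g⁻` of `G` to that
of `π g`, so the projections onto the odd parts intertwine `π` and `π⁻`, and the second claim
follows from the first by functoriality of pushforwards.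
-/

open MeasureTheory

namespace MeasureTheory.Measure

theorem map_eq_of_surjective_of_isProbabilityMeasure
    {G H : Type*} [Group G] [TopologicalSpace G] [ContinuousMul G]
    [MeasurableSpace G] [BorelSpace G]
    [Group H] [TopologicalSpace H] [IsTopologicalGroup H] [LocallyCompactSpace H]
    [MeasurableSpace H] [BorelSpace H]
    (μG : Measure G) [μG.IsHaarMeasure] [IsProbabilityMeasure μG]
    (μH : Measure H) [μH.IsHaarMeasure] [IsProbabilityMeasure μH]
    (π : G →* H) (hπ : Continuous π) (hπsurj : Function.Surjective π) :
    map π μG = μH :=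
  have : (map π μG).IsHaarMeasure := isHaarMeasure_map_of_isFiniteMeasure μG π hπ hπsurj
  have : IsProbabilityMeasure (map π μG) := isProbabilityMeasure_map hπ.aemeasurable
  isHaarMeasure_eq_of_isProbabilityMeasure _ _

end MeasureTheory.Measure

namespace MonoidHom

variable {G H : Type*} [Group G] [Group H] {σG : G ≃* G} {σH : H ≃* H}

def restrictFixed (π : G →* H) (hπσ : ∀ g, σH (π g) = π (σG g)) :
    {a : G // σG a = a} → {b : H // σH b = b} :=
  fun a => ⟨π a, by rw [hπσ, a.2]⟩

def restrictInverted (π : G →* H) (hπσ : ∀ g, σH (π g) = π (σG g)) :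
    {a : G // σG a = a⁻¹} → {b : H // σH b = b⁻¹} :=
  fun a => ⟨π a, by rw [hπσ, a.2, map_inv]⟩

theorem continuous_restrictInverted [TopologicalSpace G] [TopologicalSpace H]
    (π : G →* H) (hπ : Continuous π) (hπσ : ∀ g, σH (π g) = π (σG g)) :
    Continuous (π.restrictInverted hπσ) :=
  (hπ.comp continuous_subtype_val).subtype_mk _

theorem symm_map_eq_restrict_symm (π : G →* H) (hπσ : ∀ g, σH (π g) = π (σG g))
    (eG : {a : G // σG a = a} × {a : G // σG a = a⁻¹} ≃ G)
    (heG : ∀ x, eG x = (x.1 : G) * (x.2 : G))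
    (eH : {a : H // σH a = a} × {a : H // σH a = a⁻¹} ≃ H)
    (heH : ∀ x, eH x = (x.1 : H) * (x.2 : H)) (g : G) :
    eH.symm (π g) =
      (π.restrictFixed hπσ (eG.symm g).1, π.restrictInverted hπσ (eG.symm g).2) := by
  obtain ⟨x, rfl⟩ := eG.surjective g
  rw [eG.symm_apply_apply, eH.symm_apply_eq, heH, heG, map_mul]
  rfl

end MonoidHom

theorem sigma_pro_p_group_haar_pushforward
    {G : Type*} [Group G] [TopologicalSpace G] [IsTopologicalGroup G]
    [MeasurableSpace G] [BorelSpace G]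
    {H : Type*} [Group H] [TopologicalSpace H] [IsTopologicalGroup H] [CompactSpace H]
    [MeasurableSpace H] [BorelSpace H]
    (σG : G ≃* G) (σH : H ≃* H)
    (π : G →* H) (hπcont : Continuous π) (hπsurj : Function.Surjective π)
    (hπσ : ∀ g : G, σH (π g) = π (σG g))
    (μG : Measure G) [μG.IsHaarMeasure] [IsProbabilityMeasure μG]
    (μH : Measure H) [μH.IsHaarMeasure] [IsProbabilityMeasure μH]
    (eG : ({a : G // σG a = a} × {a : G // σG a = a⁻¹}) ≃ₜ G)
    (heG : ∀ x, eG x = (x.1 : G) * (x.2 : G))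
    (eH : ({a : H // σH a = a} × {a : H // σH a = a⁻¹}) ≃ₜ H)
    (heH : ∀ x, eH x = (x.1 : H) * (x.2 : H)) :
    Measure.map π μG = μH ∧
    Measure.map
      (fun a : {a : G // σG a = a⁻¹} =>
        (⟨π a.1, by rw [hπσ, a.2, map_inv]⟩ : {b : H // σH b = b⁻¹}))
      (Measure.map (fun g : G => (eG.symm g).2) μG) =
      Measure.map (fun h : H => (eH.symm h).2) μH := by
  have hmap : Measure.map π μG = μH :=
    Measure.map_eq_of_surjective_of_isProbabilityMeasure μG μH π hπcont hπsurj
  have hsquare :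
      π.restrictInverted hπσ ∘ (fun g => (eG.symm g).2) = (fun h => (eH.symm h).2) ∘ π :=
    funext fun g =>
      congrArg Prod.snd (π.symm_map_eq_restrict_symm hπσ eG.toEquiv heG eH.toEquiv heH g).symm
  refine ⟨hmap, ?_⟩
  change Measure.map (π.restrictInverted hπσ) _ = _
  rw [Measure.map_map (π.continuous_restrictInverted hπcont hπσ).measurable
      eG.symm.continuous.snd.measurable, hsquare,
    ← Measure.map_map eH.symm.continuous.snd.measurable hπcont.measurable, hmap]
end

section
/- Let G be a σ-pro-p-group, let N be a σ-invariant open normal subgroup of G, and let ε ∈ {+1,−1}. Then the projection G → G/N restricts to a surjective map G^ε → (G/N)^ε, the preimage in G^ε of each single element of (G/N)^ε has μ_{G^ε}-measure equal to μ_{G^ε}(N^ε), and μ_{G^ε}(N^ε) > 0. -/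
/-!
Squaring is injective on the finite group `G/N` of odd order `p^n`, so an element of `G/N` has at
most one factorisation `a * b` with `σ̄ a = a` and `σ̄ b = b⁻¹`: if `a * b = a' * b'`, then
`σ̄` fixes `a'⁻¹ * a = b' * b⁻¹` and also sends it to `b'⁻¹ * b`, whence `b'² = b²`. Hence the
factorisation `g = a * b` from `G = G⁺ G⁻` descends to the unique one of `ḡ`, and the odd factor
of `g` lies over `x = ḡ₀ ∈ (G/N)⁻` exactly when the odd factor of `g * g₀⁻¹` lies over `1`.
So the fibres over `(G/N)^ε` are right translates of one another in `G` (Haar measure on a compact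
group is right invariant), resp. left translates in `G⁺`; being open, they have positive measure.
-/

open MeasureTheory

section OddOrder

variable {Q : Type*} [Group Q]

theorem sq_injective_of_odd_natCard (hQ : Odd (Nat.card Q)) :
    Function.Injective (fun y : Q => y ^ 2) :=
  (powCoprime hQ.coprime_two_right).injective

theorem eq_of_mul_eq_mul_of_map_eq_inv (hQ : Odd (Nat.card Q)) (τ : Q →* Q) {a a' b b' : Q}
    (ha : τ a = a) (ha' : τ a' = a') (hb : τ b = b⁻¹) (hb' : τ b' = b'⁻¹)
    (h : a * b = a' * b') : b = b' := by
  have hquot : b' * b⁻¹ = a'⁻¹ * a :=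
    calc b' * b⁻¹ = a'⁻¹ * (a' * b') * b⁻¹ := by group
      _ = a'⁻¹ * (a * b) * b⁻¹ := by rw [h]
      _ = a'⁻¹ * a := by group
  have hswap : b' * b⁻¹ = b'⁻¹ * b :=
    calc b' * b⁻¹ = τ (a'⁻¹ * a) := by rw [hquot, map_mul, map_inv, ha, ha']
      _ = b'⁻¹ * b := by rw [← hquot, map_mul, map_inv, hb, hb', inv_inv]
  apply sq_injective_of_odd_natCard hQ
  simp only [sq]
  calc b * b = b' * (b'⁻¹ * b) * b := by group
    _ = b' * (b' * b⁻¹) * b := by rw [hswap]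
    _ = b' * b' := by group

theorem eq_iff_map_mul_mul_inv_eq (hQ : Odd (Nat.card Q)) (τ : Q →* Q) {a b x : Q}
    (ha : τ a = a) (hb : τ b = b⁻¹) (hx : τ x = x⁻¹) :
    b = x ↔ τ (a * b * x⁻¹) = a * b * x⁻¹ := by
  constructor
  · rintro rfl
    rwa [mul_inv_cancel_right]
  · intro h
    exact eq_of_mul_eq_mul_of_map_eq_inv hQ τ ha h hb hx (by group)

end OddOrder

structure IsOddPartMap {G : Type*} [Group G] (σ r : G → G) : Prop where
  map_odd : ∀ g, σ (r g) = (r g)⁻¹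
  map_even : ∀ g, σ (g * (r g)⁻¹) = g * (r g)⁻¹

theorem isOddPartMap_snd_symm {G : Type*} [Group G] {σ : G → G} {K : Subgroup G}
    (hK : ∀ a, a ∈ K ↔ σ a = a) (e : K × {a : G // σ a = a⁻¹} ≃ G)
    (he : ∀ x, e x = (x.1 : G) * (x.2 : G)) :
    IsOddPartMap σ (fun g => ((e.symm g).2 : G)) where
  map_odd g := (e.symm g).2.2
  map_even g := by
    have hfac : g * ((e.symm g).2 : G)⁻¹ = (e.symm g).1 := by
      rw [mul_inv_eq_iff_eq_mul, ← he, e.apply_symm_apply]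
    rw [hfac, ← hK]
    exact (e.symm g).1.2

section Quotient

variable {G : Type*} [Group G] {σ r : G → G} {N : Subgroup G} [N.Normal] {τ : G ⧸ N →* G ⧸ N}

theorem IsOddPartMap.mk_eq_iff (hr : IsOddPartMap σ r) (hQ : Odd (Nat.card (G ⧸ N)))
    (hτ : ∀ g : G, τ g = σ g) {x : G ⧸ N} (hx : τ x = x⁻¹) (g : G) :
    (r g : G ⧸ N) = x ↔ τ (g * x⁻¹) = g * x⁻¹ := by
  have ha : τ ↑(g * (r g)⁻¹) = ↑(g * (r g)⁻¹) := by rw [hτ, hr.map_even]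
  have hb : τ ↑(r g) = (↑(r g))⁻¹ := by rw [hτ, hr.map_odd, QuotientGroup.mk_inv]
  have := eq_iff_map_mul_mul_inv_eq hQ τ ha hb hx
  rwa [← QuotientGroup.mk_mul, inv_mul_cancel_right] at this

theorem IsOddPartMap.mk_eq_one_iff (hr : IsOddPartMap σ r) (hQ : Odd (Nat.card (G ⧸ N)))
    (hτ : ∀ g : G, τ g = σ g) (g : G) : (r g : G ⧸ N) = 1 ↔ τ g = g := by
  simpa using hr.mk_eq_iff hQ hτ (x := 1) (by simp) g

theorem IsOddPartMap.mk_mul_inv_eq_one_iff (hr : IsOddPartMap σ r)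
    (hQ : Odd (Nat.card (G ⧸ N))) (hτ : ∀ g : G, τ g = σ g) {g₀ : G}
    (hg₀ : τ g₀ = (g₀ : G ⧸ N)⁻¹) (g : G) :
    (r (g * g₀⁻¹) : G ⧸ N) = 1 ↔ (r g : G ⧸ N) = g₀ := by
  rw [hr.mk_eq_iff hQ hτ hg₀, hr.mk_eq_one_iff hQ hτ, QuotientGroup.mk_mul, QuotientGroup.mk_inv]

theorem IsOddPartMap.surjOn_mk_setOf_map_eq_self (hr : IsOddPartMap σ r)
    (hQ : Odd (Nat.card (G ⧸ N))) (hτ : ∀ g : G, τ g = σ g) :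
    Set.SurjOn (fun g : G => (g : G ⧸ N)) {a | σ a = a} {x | τ x = x} := by
  intro x hx
  obtain ⟨g, rfl⟩ := QuotientGroup.mk_surjective x
  have hr1 : (r g : G ⧸ N) = 1 := (hr.mk_eq_one_iff hQ hτ g).2 hx
  exact ⟨g * (r g)⁻¹, hr.map_even g, by simp [hr1]⟩

theorem IsOddPartMap.surjOn_mk_setOf_map_eq_inv (hr : IsOddPartMap σ r)
    (hQ : Odd (Nat.card (G ⧸ N))) (hτ : ∀ g : G, τ g = σ g) :
    Set.SurjOn (fun g : G => (g : G ⧸ N)) {a | σ a = a⁻¹} {x | τ x = x⁻¹} := by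
  intro x hx
  obtain ⟨g, rfl⟩ := QuotientGroup.mk_surjective x
  exact ⟨r g, hr.map_odd g, (hr.mk_eq_iff hQ hτ hx g).2 (by simp)⟩

end Quotient

theorem isMulRightInvariant_of_isProbabilityMeasure {G : Type*} [Group G] [TopologicalSpace G]
    [IsTopologicalGroup G] [LocallyCompactSpace G] [MeasurableSpace G] [BorelSpace G]
    (μ : Measure G) [μ.IsHaarMeasure] [IsProbabilityMeasure μ] : μ.IsMulRightInvariant :=
  ⟨fun g =>
    haveI := Measure.isProbabilityMeasure_map (μ := μ) (measurable_mul_const g).aemeasurable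
    Measure.isHaarMeasure_eq_of_isProbabilityMeasure _ _⟩

theorem isOpen_setOf_mk_eq {G : Type*} [Group G] [TopologicalSpace G] [IsTopologicalGroup G]
    {N : Subgroup G} (hN : IsOpen (N : Set G)) (x : G ⧸ N) : IsOpen {a : G | (a : G ⧸ N) = x} :=
  haveI := QuotientGroup.discreteTopology hN
  (isOpen_discrete {x}).preimage continuous_quotient_mk'

section FiberMeasure

variable {G H : Type*} [Group G] [TopologicalSpace G] [IsTopologicalGroup G] [MeasurableSpace G]
  [BorelSpace G] {N : Subgroup G} [MeasurableSpace H] {f : H → G} {P : G → Prop}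

theorem measure_map_setOf_and_mk_eq (hN : IsOpen (N : Set G)) (ν : Measure H) (hf : Measurable f)
    (hP : MeasurableSet {a | P a}) (hfP : ∀ h, P (f h)) (x : G ⧸ N) :
    ν.map f {a | P a ∧ (a : G ⧸ N) = x} = ν {h | (f h : G ⧸ N) = x} := by
  have hmeas : MeasurableSet {a | P a ∧ (a : G ⧸ N) = x} :=
    hP.inter (isOpen_setOf_mk_eq hN x).measurableSet
  rw [Measure.map_apply hf hmeas]
  congr 1
  ext h
  simp [hfP h]

variable [N.Normal]

theorem measure_map_setOf_and_mk_eq_of_measurePreserving (hN : IsOpen (N : Set G))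
    {ν : Measure H} (hf : Measurable f) (hP : MeasurableSet {a | P a}) (hfP : ∀ h, P (f h))
    {t : H → H} (ht : MeasurePreserving t ν ν) {x : G ⧸ N}
    (hft : ∀ h, (f (t h) : G ⧸ N) = 1 ↔ (f h : G ⧸ N) = x) :
    ν.map f {a | P a ∧ (a : G ⧸ N) = x} = ν.map f {a | P a ∧ (a : G ⧸ N) = 1} := by
  have hfiber : {h | (f h : G ⧸ N) = x} = t ⁻¹' {h | (f h : G ⧸ N) = 1} := by
    ext h
    exact (hft h).symm
  rw [measure_map_setOf_and_mk_eq hN ν hf hP hfP, measure_map_setOf_and_mk_eq hN ν hf hP hfP,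
    hfiber]
  exact ht.measure_preimage (hf (isOpen_setOf_mk_eq hN 1).measurableSet).nullMeasurableSet

theorem measure_map_setOf_and_mk_eq_one_pos [TopologicalSpace H] [OpensMeasurableSpace H]
    (hN : IsOpen (N : Set G)) (ν : Measure H) [ν.IsOpenPosMeasure] (hf : Continuous f)
    (hP : MeasurableSet {a | P a}) (hfP : ∀ h, P (f h)) {h₁ : H} (hh₁ : (f h₁ : G ⧸ N) = 1) :
    0 < ν.map f {a | P a ∧ (a : G ⧸ N) = 1} := by
  rw [measure_map_setOf_and_mk_eq hN ν hf.measurable hP hfP]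
  exact ((isOpen_setOf_mk_eq hN 1).preimage hf).measure_pos ν ⟨h₁, hh₁⟩

variable {σ : G → G} {τ : G ⧸ N →* G ⧸ N}

theorem measure_map_subtype_setOf_and_mk_eq (hN : IsOpen (N : Set G))
    (hP : MeasurableSet {a | σ a = a}) {K : Subgroup G} (hK : ∀ a, a ∈ K ↔ σ a = a)
    (μ : Measure K) [μ.IsMulLeftInvariant] (a₀ : K) :
    μ.map (↑) {a | σ a = a ∧ (a : G ⧸ N) = (a₀ : G)} =
      μ.map (↑) {a | σ a = a ∧ (a : G ⧸ N) = 1} := by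
  refine measure_map_setOf_and_mk_eq_of_measurePreserving hN continuous_subtype_val.measurable hP
    (fun u => (hK u).1 u.2) (measurePreserving_mul_left μ a₀⁻¹) fun u => ?_
  rw [Subgroup.coe_mul, Subgroup.coe_inv, QuotientGroup.mk_mul, QuotientGroup.mk_inv,
    inv_mul_eq_one, eq_comm]

theorem IsOddPartMap.measure_map_setOf_and_mk_eq {r : G → G} (hr : IsOddPartMap σ r)
    (hQ : Odd (Nat.card (G ⧸ N))) (hτ : ∀ g : G, τ g = σ g) (hN : IsOpen (N : Set G))
    (hrm : Measurable r) (hP : MeasurableSet {a | σ a = a⁻¹}) (μ : Measure G)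
    [μ.IsMulRightInvariant] {x : G ⧸ N} (hx : τ x = x⁻¹) :
    μ.map r {a | σ a = a⁻¹ ∧ (a : G ⧸ N) = x} = μ.map r {a | σ a = a⁻¹ ∧ (a : G ⧸ N) = 1} := by
  obtain ⟨g₀, rfl⟩ := QuotientGroup.mk_surjective x
  exact measure_map_setOf_and_mk_eq_of_measurePreserving hN hrm hP hr.map_odd
    (measurePreserving_mul_right μ g₀⁻¹) (hr.mk_mul_inv_eq_one_iff hQ hτ hx)

end FiberMeasure

theorem sigma_pro_p_group_open_quotient_fibers_measure_general
    {p : ℕ} (hodd : Odd p)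
    {G : Type*} [Group G] [TopologicalSpace G] [IsTopologicalGroup G]
    [CompactSpace G] [T2Space G]
    [MeasurableSpace G] [BorelSpace G]
    (hGpro : ∀ U : Subgroup G, U.Normal → IsOpen (U : Set G) → ∃ n : ℕ, U.index = p ^ n)
    (σ : G ≃* G) (hσcont : Continuous σ)
    (μG : Measure G) [μG.IsHaarMeasure] [IsProbabilityMeasure μG]
    (Gp : Subgroup G) (hGp : ∀ a : G, a ∈ Gp ↔ σ a = a)
    (μp : Measure Gp) [μp.IsHaarMeasure]
    (e : (Gp × {a : G // σ a = a⁻¹}) ≃ₜ G)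
    (he : ∀ x : Gp × {a : G // σ a = a⁻¹}, e x = (x.1 : G) * (x.2 : G))
    (N : Subgroup G) [N.Normal] (hNopen : IsOpen (N : Set G))
    (σbar : G ⧸ N →* G ⧸ N) (hσbar : ∀ g : G, σbar (g : G ⧸ N) = ((σ g : G) : G ⧸ N))
    (ε : ℤ)
    (μGε : Measure G)
    (hμGε : (ε = 1 ∧ μGε = Measure.map (fun a : Gp => (a : G)) μp) ∨
            (ε = -1 ∧ μGε = Measure.map (fun g : G => ((e.symm g).2 : G)) μG)) :
    Set.MapsTo (fun g : G => (g : G ⧸ N)) {a : G | σ a = a ^ ε}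
      {x : G ⧸ N | σbar x = x ^ ε} ∧
    Set.SurjOn (fun g : G => (g : G ⧸ N)) {a : G | σ a = a ^ ε}
      {x : G ⧸ N | σbar x = x ^ ε} ∧
    (∀ x : G ⧸ N, σbar x = x ^ ε →
      μGε {a : G | σ a = a ^ ε ∧ (a : G ⧸ N) = x} =
        μGε ((N : Set G) ∩ {a : G | σ a = a ^ ε})) ∧
    0 < μGε ((N : Set G) ∩ {a : G | σ a = a ^ ε}) := by
  have hQ : Odd (Nat.card (G ⧸ N)) := by
    obtain ⟨n, hn⟩ := hGpro N inferInstance hNopen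
    rw [← Subgroup.index_eq_card, hn]
    exact hodd.pow
  have hr := isOddPartMap_snd_symm hGp e.toEquiv he
  have hNinter : ∀ P : G → Prop, (N : Set G) ∩ {a | P a} = {a | P a ∧ (a : G ⧸ N) = 1} :=
    fun P => by ext a; simp [QuotientGroup.eq_one_iff, and_comm]
  have hP : MeasurableSet {a : G | σ a = a ^ ε} :=
    (isClosed_eq hσcont (continuous_zpow ε)).measurableSet
  rw [hNinter]
  refine ⟨fun a (ha : σ a = a ^ ε) => by rw [Set.mem_ofPred_eq, hσbar, ha, QuotientGroup.mk_zpow],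
    ?_⟩
  rcases hμGε with ⟨rfl, rfl⟩ | ⟨rfl, rfl⟩
  · have hsurj := hr.surjOn_mk_setOf_map_eq_self hQ hσbar
    simp only [zpow_one] at hP hsurj ⊢
    refine ⟨hsurj, fun x hx => ?_, measure_map_setOf_and_mk_eq_one_pos hNopen μp
      continuous_subtype_val hP (fun u => (hGp u).1 u.2) (h₁ := 1) (by simp)⟩
    obtain ⟨a, ha, rfl⟩ := hsurj hx
    exact measure_map_subtype_setOf_and_mk_eq hNopen hP hGp μp ⟨a, (hGp a).2 ha⟩
  · have hrc : Continuous fun g => ((e.symm g).2 : G) := by fun_prop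
    have := isMulRightInvariant_of_isProbabilityMeasure μG
    simp only [zpow_neg, zpow_one] at hP ⊢
    exact ⟨hr.surjOn_mk_setOf_map_eq_inv hQ hσbar,
      fun x hx => hr.measure_map_setOf_and_mk_eq hQ hσbar hNopen hrc.measurable hP μG hx,
      measure_map_setOf_and_mk_eq_one_pos hNopen μG hrc hP hr.map_odd (h₁ := 1)
        ((hr.mk_eq_one_iff hQ hσbar 1).2 (map_one σbar))⟩

/-- Let `G` be a `σ`-pro-`p`-group, `N` a `σ`-invariant open
normal subgroup and `ε ∈ {+1, −1}`. The measure `μ_{G^ε}` is realized as a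
measure `μGε` on `G`: for `ε = 1` it is the pushforward to `G` of the Haar
probability measure `μp` on the compact group `G⁺`, and for `ε = −1` it is the
pushforward of the Haar probability measure `μG` of `G` under the second
component of the inverse of the multiplication homeomorphism
`e : G⁺ × G⁻ ≃ₜ G`. Then the projection `G → G/N` restricts to a surjective
map `G^ε → (G/N)^ε`, the preimage in `G^ε` of each single element of
`(G/N)^ε` has `μ_{G^ε}`-measure equal to `μ_{G^ε}(N^ε)`, and
`μ_{G^ε}(N^ε) > 0`. Here `σbar` is the automorphism of `G/N` induced by `σ`. -/
theorem sigma_pro_p_group_open_quotient_fibers_measure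
    {p : ℕ} (hp : p.Prime) (hodd : Odd p)
    {G : Type*} [Group G] [TopologicalSpace G] [IsTopologicalGroup G]
    [CompactSpace G] [T2Space G] [TotallyDisconnectedSpace G]
    [MeasurableSpace G] [BorelSpace G]
    (hGpro : ∀ U : Subgroup G, U.Normal → IsOpen (U : Set G) → ∃ n : ℕ, U.index = p ^ n)
    (σ : G ≃* G) (hσcont : Continuous σ) (hσ : ∀ a, σ (σ a) = a)
    (μG : Measure G) [μG.IsHaarMeasure] [IsProbabilityMeasure μG] [μG.Regular]
    (Gp : Subgroup G) (hGp : ∀ a : G, a ∈ Gp ↔ σ a = a)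
    (μp : Measure Gp) [μp.IsHaarMeasure] [IsProbabilityMeasure μp] [μp.Regular]
    (e : (Gp × {a : G // σ a = a⁻¹}) ≃ₜ G)
    (he : ∀ x : Gp × {a : G // σ a = a⁻¹}, e x = (x.1 : G) * (x.2 : G))
    (N : Subgroup G) [N.Normal] (hNopen : IsOpen (N : Set G))
    (hNσ : ∀ a, σ a ∈ N ↔ a ∈ N)
    (σbar : G ⧸ N →* G ⧸ N) (hσbar : ∀ g : G, σbar (g : G ⧸ N) = ((σ g : G) : G ⧸ N))
    (ε : ℤ) (hε : ε = 1 ∨ ε = -1)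
    (μGε : Measure G)
    (hμGε : (ε = 1 ∧ μGε = Measure.map (fun a : Gp => (a : G)) μp) ∨
            (ε = -1 ∧ μGε = Measure.map (fun g : G => ((e.symm g).2 : G)) μG)) :
    Set.MapsTo (fun g : G => (g : G ⧸ N)) {a : G | σ a = a ^ ε}
      {x : G ⧸ N | σbar x = x ^ ε} ∧
    Set.SurjOn (fun g : G => (g : G ⧸ N)) {a : G | σ a = a ^ ε}
      {x : G ⧸ N | σbar x = x ^ ε} ∧
    (∀ x : G ⧸ N, σbar x = x ^ ε →
      μGε {a : G | σ a = a ^ ε ∧ (a : G ⧸ N) = x} =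
        μGε ((N : Set G) ∩ {a : G | σ a = a ^ ε})) ∧
    0 < μGε ((N : Set G) ∩ {a : G | σ a = a ^ ε}) :=
  sigma_pro_p_group_open_quotient_fibers_measure_general hodd hGpro σ hσcont μG Gp hGp μp e he N
    hNopen σbar hσbar ε μGε hμGε
end

section
/- Let G be a σ-pro-p-group, let N be a σ-invariant open normal subgroup of G, and let ε ∈ {+1,−1}. Regard N, with the restriction of σ, as a σ-pro-p-group in its own right, with odd/even Haar measure μ_{N^ε}. Then the restriction of μ_{G^ε} to the subset N^ε = N ∩ G^ε equals |(G/N)^ε|⁻¹ · μ_{N^ε} (under the inclusion N^ε ⊆ G^ε). -/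
/-!
When every open normal subgroup of `G` has odd index, squaring is bijective on `G ⧸ N`, so an
involutive automorphism of `G ⧸ N` splits it as `(G ⧸ N)⁺ × (G ⧸ N)⁻` and
`[G : N] = |(G ⧸ N)⁺| · |(G ⧸ N)⁻|`; moreover `G⁺ → (G ⧸ N)⁺` is onto, because the odd factor `b`
of `g = a b` satisfies `b² ∈ N`, hence `b ∈ N`, whenever `gN` is `σ`-fixed. The Haar probability
measure of a compact group restricted to an open subgroup `H` is `[G : H]⁻¹` times the Haar
probability measure of `H`, which gives the even case with `H = N ∩ G⁺`. For the odd case, the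
set of `g = a b` with `b ∈ N⁻ ∩ A` is invariant under left translation by `G⁺`, so it has
`[G⁺ : N⁺]` times the measure of its part with `a ∈ N`; that part is the subset of `N` whose
`N⁻`-component lies in `A`, of measure `[G : N]⁻¹ μ_{N⁻}(A)`.
-/

open MeasureTheory Set Topology
open scoped ENNReal

section Involution

variable {Q : Type*} [Group Q] {τ : Q →* Q}

theorem bijective_mul_fixed_antifixed (hsq : Function.Bijective fun x : Q => x ^ 2)
    (hτ : ∀ x, τ (τ x) = x) :
    Function.Bijective fun x : {x : Q // τ x = x} × {x : Q // τ x = x⁻¹} => (x.1 : Q) * x.2 := by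
  constructor
  · rintro ⟨⟨a, ha⟩, ⟨b, hb⟩⟩ ⟨⟨a', ha'⟩, ⟨b', hb'⟩⟩ (h : a * b = a' * b')
    have hfix : b' * b⁻¹ = a'⁻¹ * a := by
      rw [eq_inv_mul_iff_mul_eq, ← mul_assoc, mul_inv_eq_iff_eq_mul, h]
    -- `b' * b⁻¹` is fixed by `τ` but `τ` sends it to `b'⁻¹ * b`, so `b' ^ 2 = b ^ 2`
    have hτfix : b'⁻¹ * b = b' * b⁻¹ := by
      rw [hfix, ← ha', ← ha, ← map_inv, ← map_mul, ← hfix, map_mul, map_inv, hb, hb', inv_inv]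
    have hbb : b' = b := hsq.1 (by
      simp only [pow_two]
      rw [← mul_inv_eq_iff_eq_mul, mul_assoc, ← hτfix, mul_inv_cancel_left])
    subst hbb
    simp [mul_right_cancel h]
  · intro g
    obtain ⟨b, hb : b ^ 2 = _⟩ := hsq.2 ((τ g)⁻¹ * g)
    have hτb : τ b = b⁻¹ := hsq.1 (by
      simp only [← map_pow, hb, map_mul, map_inv, hτ, inv_pow, mul_inv_rev, inv_inv])
    refine ⟨(⟨g * b⁻¹, ?_⟩, ⟨b, hτb⟩), by simp⟩
    have hτg : τ g = g * (b ^ 2)⁻¹ := by rw [hb]; group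
    rw [map_mul, map_inv, hτb, inv_inv, hτg]
    group

theorem card_eq_card_fixed_mul_card_antifixed (hQ : Odd (Nat.card Q)) (hτ : ∀ x, τ (τ x) = x) :
    Nat.card Q = Nat.card {x : Q // τ x = x} * Nat.card {x : Q // τ x = x⁻¹} := by
  rw [← Nat.card_prod]
  exact (Nat.card_congr (Equiv.ofBijective _ (bijective_mul_fixed_antifixed
    (Nat.Coprime.pow_left_bijective hQ.coprime_two_right) hτ))).symm

end Involution

theorem measure_eq_index_mul_measure_inter_preimage {K X : Type*} [Group K] [MulAction K X]
    [MeasurableSpace X] [MeasurableConstSMul K X] (μ : Measure X) [SMulInvariantMeasure K X μ]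
    (H : Subgroup K) [H.FiniteIndex] {α : X → K} (hα : ∀ (k : K) x, α (k • x) = k * α x)
    {s : Set X} (hs : ∀ (k : K) x, k • x ∈ s ↔ x ∈ s) (hmeas : MeasurableSet (s ∩ α ⁻¹' H)) :
    μ s = H.index * μ (s ∩ α ⁻¹' H) := by
  classical
  have := Fintype.ofFinite (K ⧸ H)
  set D := s ∩ α ⁻¹' H
  have hpiece : ∀ (q : K ⧸ H) x, q.out⁻¹ • x ∈ D ↔ x ∈ s ∧ (α x : K ⧸ H) = q := fun q x => by
    rw [mem_inter_iff, hs, mem_preimage, hα, SetLike.mem_coe, ← QuotientGroup.eq,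
      QuotientGroup.out_eq', eq_comm]
  have hcover : s = ⋃ q : K ⧸ H, (q.out⁻¹ • ·) ⁻¹' D := by
    ext x
    simp only [mem_iUnion, mem_preimage, hpiece, exists_and_left, exists_eq', and_true]
  have hdisj : Pairwise (Function.onFun Disjoint fun q : K ⧸ H => (q.out⁻¹ • ·) ⁻¹' D) :=
    fun q q' hne => disjoint_left.2 fun x hx hx' => hne (((hpiece q x).1 hx).2.symm.trans
      ((hpiece q' x).1 hx').2)
  calc μ s = ∑' q : K ⧸ H, μ ((q.out⁻¹ • ·) ⁻¹' D) := by
        conv_lhs => rw [hcover]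
        exact measure_iUnion hdisj fun q => hmeas.preimage (measurable_const_smul _)
    _ = H.index * μ D := by
        simp only [measure_preimage_smul, tsum_fintype, Finset.sum_const, Finset.card_univ,
          nsmul_eq_mul, Subgroup.index, Nat.card_eq_fintype_card]

theorem restrict_range_eq_inv_index_smul_map {K L : Type*} [Group K] [TopologicalSpace K]
    [IsTopologicalGroup K] [CompactSpace K] [MeasurableSpace K] [BorelSpace K]
    (μ : Measure K) [μ.IsHaarMeasure] [IsProbabilityMeasure μ]
    [Group L] [TopologicalSpace L] [IsTopologicalGroup L] [MeasurableSpace L] [BorelSpace L]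
    (ν : Measure L) [ν.IsHaarMeasure] [IsProbabilityMeasure ν] {ι : L →* K}
    (hι : IsOpenEmbedding ι) :
    μ.restrict ι.range = (ι.range.index : ℝ≥0∞)⁻¹ • ν.map ι := by
  have hopen : IsOpen (ι.range : Set K) := by rw [MonoidHom.coe_range]; exact hι.isOpen_range
  have := ι.range.quotient_finite_of_isOpen hopen
  have := ι.range.finiteIndex_of_finite_quotient
  have : CompactSpace L := IsClosedEmbedding.compactSpace (f := ι)
    ⟨hι.isEmbedding, by simpa using ι.range.isClosed_of_isOpen hopen⟩
  have hindex : (ι.range.index : ℝ≥0∞) * μ ι.range = 1 := by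
    rw [← measure_univ (μ := μ), measure_eq_index_mul_measure_inter_preimage μ ι.range
      (α := id) (s := univ) (fun _ _ => rfl) (fun _ _ => Iff.rfl)
      (by simpa using hopen.measurableSet),
      univ_inter, preimage_id]
  have hcomap : μ.comap ι = μ ι.range • ν := by
    have := Measure.IsHaarMeasure.comap (mH := inferInstance) μ hι
    set c := (μ.comap ι).haarScalarFactor ν
    have hfactor : μ.comap ι = c • ν := Measure.isMulInvariant_eq_smul_of_compactSpace _ _
    have hc : μ ι.range = c := by
      rw [MonoidHom.coe_range, ← image_univ, ← hι.measurableEmbedding.comap_apply, hfactor]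
      simp
    rw [hfactor, hc]
    rfl
  rw [MonoidHom.coe_range, ← hι.measurableEmbedding.map_comap, hcomap, Measure.map_smul,
    ENNReal.eq_inv_of_mul_eq_one_left hindex, inv_inv]

section SigmaGroup

variable {G : Type*} [Group G] {σ : G ≃* G} {Gp : Subgroup G}

theorem index_subgroupOf_eq_card_fixed (hGp : ∀ a, a ∈ Gp ↔ σ a = a)
    (hdec : ∀ g : G, ∃ a b, σ a = a ∧ σ b = b⁻¹ ∧ a * b = g)
    {N : Subgroup G} [N.Normal] (hN : Odd N.index)
    {σbar : G ⧸ N →* G ⧸ N} (hσbar : ∀ g : G, σbar g = σ g) :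
    (N.subgroupOf Gp).index = Nat.card {x : G ⧸ N // σbar x = x} := by
  let f : Gp →* G ⧸ N := (QuotientGroup.mk' N).comp Gp.subtype
  have hker : f.ker = N.subgroupOf Gp := by ext; simp [f, Subgroup.mem_subgroupOf]
  have hrange : (f.range : Set (G ⧸ N)) = {x | σbar x = x} := by
    ext x
    constructor
    · rintro ⟨a, rfl⟩
      simp [f, hσbar, (hGp a).1 a.2]
    · intro hx
      obtain ⟨g, rfl⟩ := QuotientGroup.mk_surjective x
      obtain ⟨a, b, ha, hb, rfl⟩ := hdec g
      -- `σ (a * b) = a * b⁻¹`, so `b` and `b⁻¹` agree modulo `N`; odd order forces `b ∈ N`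
      have hb2 : (b : G ⧸ N) ^ 2 = 1 ^ 2 := by
        simp only [mem_ofPred_eq, hσbar, map_mul, ha, hb, QuotientGroup.mk_mul,
          QuotientGroup.mk_inv, mul_right_inj, inv_eq_iff_mul_eq_one] at hx
        rw [pow_two, hx, one_pow]
      have hsq := Nat.Coprime.pow_left_bijective (G := G ⧸ N)
        (by rw [← N.index_eq_card]; exact hN.coprime_two_right)
      refine ⟨⟨a, (hGp a).2 ha⟩, ?_⟩
      simp [f, hsq.1 hb2]
  rw [← hker, Subgroup.index_ker]
  exact Nat.card_congr (Equiv.setCongr hrange)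

theorem index_subgroupOf_mul_inv_index (hσ : ∀ a, σ (σ a) = a) (hGp : ∀ a, a ∈ Gp ↔ σ a = a)
    (hdec : ∀ g : G, ∃ a b, σ a = a ∧ σ b = b⁻¹ ∧ a * b = g)
    {N : Subgroup G} [N.Normal] (hN : Odd N.index)
    {σbar : G ⧸ N →* G ⧸ N} (hσbar : ∀ g : G, σbar g = σ g) :
    ((N.subgroupOf Gp).index : ℝ≥0∞) * (N.index : ℝ≥0∞)⁻¹ =
      (Nat.card {x : G ⧸ N // σbar x = x⁻¹} : ℝ≥0∞)⁻¹ := by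
  have hσbar_invol : ∀ x, σbar (σbar x) = x := fun x =>
    QuotientGroup.induction_on x fun g => by rw [hσbar, hσbar, hσ]
  have : Finite (G ⧸ N) := Nat.finite_of_card_ne_zero (N.index_eq_card ▸ hN.pos.ne')
  have : Nonempty {x : G ⧸ N // σbar x = x} := ⟨⟨1, map_one σbar⟩⟩
  have h0 : (Nat.card {x : G ⧸ N // σbar x = x} : ℝ≥0∞) ≠ 0 := by exact_mod_cast Nat.card_pos.ne'
  rw [index_subgroupOf_eq_card_fixed hGp hdec hN hσbar, N.index_eq_card,
    card_eq_card_fixed_mul_card_antifixed (N.index_eq_card ▸ hN) hσbar_invol, Nat.cast_mul,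
    ENNReal.mul_inv (.inl h0) (.inl (ENNReal.natCast_ne_top _)), ← mul_assoc,
    ENNReal.mul_inv_cancel h0 (ENNReal.natCast_ne_top _), one_mul]

variable [TopologicalSpace G] {e : Gp × {a : G // σ a = a⁻¹} ≃ₜ G}

theorem symm_apply_mul_of_apply_eq_mul (he : ∀ x, e x = (x.1 : G) * (x.2 : G))
    (a : Gp) (b : {a : G // σ a = a⁻¹}) : e.symm (a * b) = (a, b) :=
  e.symm_apply_eq.2 (he (a, b)).symm

theorem mul_symm_apply_of_apply_eq_mul (he : ∀ x, e x = (x.1 : G) * (x.2 : G)) (g : G) :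
    ((e.symm g).1 : G) * (e.symm g).2 = g := by
  rw [← he, e.apply_symm_apply]

theorem symm_apply_mul_left_of_apply_eq_mul (he : ∀ x, e x = (x.1 : G) * (x.2 : G))
    (k : Gp) (g : G) : e.symm (k * g) = (k * (e.symm g).1, (e.symm g).2) := by
  rw [← symm_apply_mul_of_apply_eq_mul he, Subgroup.coe_mul, mul_assoc,
    mul_symm_apply_of_apply_eq_mul he]

theorem symm_apply_coe_of_apply_eq_mul (hGp : ∀ a, a ∈ Gp ↔ σ a = a)
    (he : ∀ x, e x = (x.1 : G) * (x.2 : G)) {N : Subgroup G} {Np : Subgroup N}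
    (hNp : ∀ a : N, a ∈ Np ↔ σ (a : G) = (a : G))
    {eN : Np × {a : N // σ (a : G) = (a : G)⁻¹} ≃ₜ N}
    (heN : ∀ x : Np × {a : N // σ (a : G) = (a : G)⁻¹}, eN x = (x.1 : N) * (x.2 : N)) (n : N) :
    e.symm n = (⟨(eN.symm n).1, (hGp _).2 ((hNp _).1 (eN.symm n).1.2)⟩,
      ⟨(eN.symm n).2, (eN.symm n).2.2⟩) := by
  rw [← symm_apply_mul_of_apply_eq_mul he]
  conv_lhs => rw [← eN.apply_symm_apply n, heN]
  rfl

end SigmaGroup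

section Haar

variable {G : Type*} [Group G] [TopologicalSpace G] [IsTopologicalGroup G] [CompactSpace G]
  [MeasurableSpace G] [BorelSpace G] {σ : G ≃* G} {Gp : Subgroup G}

theorem restrict_map_subtype_inter_eq (hGp : IsClosed (Gp : Set G))
    (μp : Measure Gp) [μp.IsHaarMeasure] [IsProbabilityMeasure μp]
    {N : Subgroup G} (hNopen : IsOpen (N : Set G)) {Np : Subgroup N}
    (hNp : ∀ a : N, a ∈ Np ↔ (a : G) ∈ Gp) (μNp : Measure Np) [μNp.IsHaarMeasure]
    [IsProbabilityMeasure μNp] :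
    (μp.map fun a : Gp => (a : G)).restrict ((N : Set G) ∩ Gp) =
      ((N.subgroupOf Gp).index : ℝ≥0∞)⁻¹ • μNp.map fun a : Np => ((a : N) : G) := by
  have : CompactSpace Gp := isCompact_iff_compactSpace.1 hGp.isCompact
  let ι : Np →* Gp := (N.subtype.comp Np.subtype).codRestrict Gp fun a => (hNp a).1 a.2
  have hrange : ι.range = N.subgroupOf Gp := by
    ext a
    simp only [MonoidHom.mem_range, Subgroup.mem_subgroupOf]
    exact ⟨fun ⟨x, hx⟩ => hx ▸ x.1.2, fun ha => ⟨⟨⟨a, ha⟩, (hNp _).2 a.2⟩, rfl⟩⟩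
  have hι : IsOpenEmbedding ι := by
    refine ⟨(IsEmbedding.subtypeVal.of_comp_iff).1 ?_, ?_⟩
    · exact (IsEmbedding.subtypeVal.comp IsEmbedding.subtypeVal :
        IsEmbedding fun a : Np => ((a : N) : G))
    · rw [← MonoidHom.coe_range, hrange]
      exact hNopen.preimage continuous_subtype_val
  have hpre : (fun a : Gp => (a : G)) ⁻¹' ((N : Set G) ∩ Gp) = ι.range := by
    ext a
    simp [hrange, Subgroup.mem_subgroupOf]
  rw [Measure.restrict_map measurable_subtype_coe (hNopen.measurableSet.inter hGp.measurableSet),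
    hpre, restrict_range_eq_inv_index_smul_map μp μNp hι, hrange, Measure.map_smul,
    Measure.map_map measurable_subtype_coe hι.continuous.measurable]
  rfl

theorem restrict_map_snd_symm_eq [T2Space G] (hσcont : Continuous σ) (hGp : ∀ a, a ∈ Gp ↔ σ a = a)
    (μG : Measure G) [μG.IsHaarMeasure] [IsProbabilityMeasure μG]
    {e : Gp × {a : G // σ a = a⁻¹} ≃ₜ G} (he : ∀ x, e x = (x.1 : G) * (x.2 : G))
    {N : Subgroup G} (hNopen : IsOpen (N : Set G))
    (μN : Measure N) [μN.IsHaarMeasure] [IsProbabilityMeasure μN]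
    {Np : Subgroup N} (hNp : ∀ a : N, a ∈ Np ↔ σ (a : G) = (a : G))
    {eN : Np × {a : N // σ (a : G) = (a : G)⁻¹} ≃ₜ N}
    (heN : ∀ x : Np × {a : N // σ (a : G) = (a : G)⁻¹}, eN x = (x.1 : N) * (x.2 : N)) :
    (μG.map fun g => ((e.symm g).2 : G)).restrict ((N : Set G) ∩ {a | σ a = a⁻¹}) =
      (((N.subgroupOf Gp).index : ℝ≥0∞) * (N.index : ℝ≥0∞)⁻¹) •
        μN.map fun n => (((eN.symm n).2 : N) : G) := by
  have := N.quotient_finite_of_isOpen hNopen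
  have := N.finiteIndex_of_finite_quotient
  set π : G → G := fun g => ((e.symm g).2 : G)
  set α : G → Gp := fun g => (e.symm g).1
  have hπ : Continuous π := by fun_prop
  have hcompat (n : N) : α n ∈ N.subgroupOf Gp ∧ π n = ((eN.symm n).2 : G) := by
    simp only [α, π, symm_apply_coe_of_apply_eq_mul hGp he hNp heN, Subgroup.mem_subgroupOf,
      and_true]
    exact (eN.symm n).1.1.2
  ext A hA
  have hS : MeasurableSet ((N : Set G) ∩ {a | σ a = a⁻¹}) :=
    hNopen.measurableSet.inter (isClosed_eq hσcont continuous_inv).measurableSet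
  have hpiece : π ⁻¹' (A ∩ ((N : Set G) ∩ {a | σ a = a⁻¹})) ∩ α ⁻¹' (N.subgroupOf Gp) =
      π ⁻¹' A ∩ N := by
    ext g
    simp only [mem_inter_iff, mem_preimage, SetLike.mem_coe, mem_ofPred_eq]
    constructor
    · rintro ⟨⟨hgA, hgN, -⟩, hαg⟩
      refine ⟨hgA, ?_⟩
      rw [← mul_symm_apply_of_apply_eq_mul he g]
      exact N.mul_mem hαg hgN
    · rintro ⟨hgA, hgN⟩
      obtain ⟨hαg, hπg⟩ := hcompat ⟨g, hgN⟩
      rw [hπg] at hgA ⊢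
      exact ⟨⟨hgA, (eN.symm _).2.1.2, (eN.symm _).2.2⟩, hαg⟩
  rw [Measure.restrict_apply hA, Measure.map_apply hπ.measurable (hA.inter hS),
    measure_eq_index_mul_measure_inter_preimage μG (N.subgroupOf Gp) (α := α)
      (fun k g => congrArg Prod.fst (symm_apply_mul_left_of_apply_eq_mul he k g))
      (fun k g => by
        simp only [mem_preimage, Subgroup.smul_def, smul_eq_mul, π,
          symm_apply_mul_left_of_apply_eq_mul he])
      (by rw [hpiece]; exact (hπ.measurable hA).inter hNopen.measurableSet),
    hpiece, ← Measure.restrict_apply (hπ.measurable hA)]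
  have hrestrict := restrict_range_eq_inv_index_smul_map μG μN hNopen.isOpenEmbedding_subtypeVal
    (ι := N.subtype)
  rw [N.range_subtype] at hrestrict
  have hpre : N.subtype ⁻¹' (π ⁻¹' A) = (fun n => (((eN.symm n).2 : N) : G)) ⁻¹' A := by
    ext n
    simp [(hcompat n).2]
  have hπN : Continuous fun n => (((eN.symm n).2 : N) : G) := by fun_prop
  rw [hrestrict, Measure.smul_apply, Measure.smul_apply,
    Measure.map_apply (f := N.subtype) measurable_subtype_coe (hπ.measurable hA),
    Measure.map_apply hπN.measurable hA, hpre, smul_eq_mul, smul_eq_mul, mul_assoc]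

end Haar

theorem sigma_pro_p_group_restrict_haar_to_open_subgroup_general
    {p : ℕ} (hodd : Odd p)
    {G : Type*} [Group G] [TopologicalSpace G] [IsTopologicalGroup G]
    [CompactSpace G] [T2Space G]
    [MeasurableSpace G] [BorelSpace G]
    (hGpro : ∀ U : Subgroup G, U.Normal → IsOpen (U : Set G) → ∃ n : ℕ, U.index = p ^ n)
    (σ : G ≃* G) (hσcont : Continuous σ) (hσ : ∀ a, σ (σ a) = a)
    (μG : Measure G) [μG.IsHaarMeasure] [IsProbabilityMeasure μG]
    (Gp : Subgroup G) (hGp : ∀ a : G, a ∈ Gp ↔ σ a = a)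
    (μp : Measure Gp) [μp.IsHaarMeasure] [IsProbabilityMeasure μp]
    (e : (Gp × {a : G // σ a = a⁻¹}) ≃ₜ G)
    (he : ∀ x : Gp × {a : G // σ a = a⁻¹}, e x = (x.1 : G) * (x.2 : G))
    (N : Subgroup G) [N.Normal] (hNopen : IsOpen (N : Set G))
    (σbar : G ⧸ N →* G ⧸ N) (hσbar : ∀ g : G, σbar (g : G ⧸ N) = ((σ g : G) : G ⧸ N))
    (μN : Measure N) [μN.IsHaarMeasure] [IsProbabilityMeasure μN]
    (Np : Subgroup N) (hNp : ∀ a : N, a ∈ Np ↔ σ (a : G) = (a : G))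
    (μNp : Measure Np) [μNp.IsHaarMeasure] [IsProbabilityMeasure μNp]
    (eN : (Np × {a : N // σ (a : G) = (a : G)⁻¹}) ≃ₜ N)
    (heN : ∀ x : Np × {a : N // σ (a : G) = (a : G)⁻¹}, eN x = (x.1 : N) * (x.2 : N))
    (ε : ℤ) (hε : ε = 1 ∨ ε = -1)
    (μGε : Measure G)
    (hμGε : (ε = 1 ∧ μGε = Measure.map (fun a : Gp => (a : G)) μp) ∨
            (ε = -1 ∧ μGε = Measure.map (fun g : G => ((e.symm g).2 : G)) μG))
    (μNε : Measure G)
    (hμNε : (ε = 1 ∧ μNε = Measure.map (fun a : Np => ((a : N) : G)) μNp) ∨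
            (ε = -1 ∧ μNε = Measure.map (fun a : N => (((eN.symm a).2 : N) : G)) μN)) :
    μGε.restrict ((N : Set G) ∩ {a : G | σ a = a ^ ε}) =
      (Nat.card {x : G ⧸ N // σbar x = x ^ ε} : ENNReal)⁻¹ • μNε := by
  have hN : Odd N.index := by
    obtain ⟨n, hn⟩ := hGpro N inferInstance hNopen
    exact hn ▸ hodd.pow
  have hGpset : (Gp : Set G) = {a | σ a = a} := Set.ext hGp
  have hdec (g : G) : ∃ a b, σ a = a ∧ σ b = b⁻¹ ∧ a * b = g :=
    ⟨_, _, (hGp _).1 (e.symm g).1.2, (e.symm g).2.2, mul_symm_apply_of_apply_eq_mul he g⟩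
  rcases hε with rfl | rfl
  · obtain ⟨-, rfl⟩ := hμGε.resolve_right (by norm_num)
    obtain ⟨-, rfl⟩ := hμNε.resolve_right (by norm_num)
    simp only [zpow_one]
    rw [← hGpset, restrict_map_subtype_inter_eq (hGpset ▸ isClosed_eq hσcont continuous_id) μp
      hNopen (fun a => (hNp a).trans (hGp a).symm) μNp,
      index_subgroupOf_eq_card_fixed hGp hdec hN hσbar]
  · obtain ⟨-, rfl⟩ := hμGε.resolve_left (by norm_num)
    obtain ⟨-, rfl⟩ := hμNε.resolve_left (by norm_num)
    simp only [zpow_neg_one]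
    rw [restrict_map_snd_symm_eq hσcont hGp μG he hNopen μN hNp heN,
      index_subgroupOf_mul_inv_index hσ hGp hdec hN hσbar]

/-- Let `G` be a `σ`-pro-`p`-group, `N` a `σ`-invariant open
normal subgroup and `ε ∈ {+1, −1}`. Regard `N`, with the restriction of `σ`,
as a `σ`-pro-`p`-group in its own right. All the odd/even Haar measures are
realized as measures on `G`: `μGε` (the measure `μ_{G^ε}`) is, for `ε = 1`,
the pushforward to `G` of the Haar probability measure `μp` on `G⁺`, and for
`ε = −1` the pushforward of the Haar probability measure `μG` under the second
component of the inverse of the multiplication homeomorphism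
`e : G⁺ × G⁻ ≃ₜ G`; similarly `μNε` (the measure `μ_{N^ε}`) is built from the
Haar probability measures `μNp` on `N⁺` and `μN` on `N` via the multiplication
homeomorphism `eN : N⁺ × N⁻ ≃ₜ N`. Then the restriction of `μ_{G^ε}` to the
subset `N^ε = N ∩ G^ε` equals `|(G/N)^ε|⁻¹ · μ_{N^ε}`. Here `σbar` is the
automorphism of `G/N` induced by `σ`. -/
theorem sigma_pro_p_group_restrict_haar_to_open_subgroup
    {p : ℕ} (hp : p.Prime) (hodd : Odd p)
    {G : Type*} [Group G] [TopologicalSpace G] [IsTopologicalGroup G]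
    [CompactSpace G] [T2Space G] [TotallyDisconnectedSpace G]
    [MeasurableSpace G] [BorelSpace G]
    (hGpro : ∀ U : Subgroup G, U.Normal → IsOpen (U : Set G) → ∃ n : ℕ, U.index = p ^ n)
    (σ : G ≃* G) (hσcont : Continuous σ) (hσ : ∀ a, σ (σ a) = a)
    (μG : Measure G) [μG.IsHaarMeasure] [IsProbabilityMeasure μG] [μG.Regular]
    (Gp : Subgroup G) (hGp : ∀ a : G, a ∈ Gp ↔ σ a = a)
    (μp : Measure Gp) [μp.IsHaarMeasure] [IsProbabilityMeasure μp] [μp.Regular]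
    (e : (Gp × {a : G // σ a = a⁻¹}) ≃ₜ G)
    (he : ∀ x : Gp × {a : G // σ a = a⁻¹}, e x = (x.1 : G) * (x.2 : G))
    (N : Subgroup G) [N.Normal] (hNopen : IsOpen (N : Set G))
    (hNσ : ∀ a, σ a ∈ N ↔ a ∈ N)
    (σbar : G ⧸ N →* G ⧸ N) (hσbar : ∀ g : G, σbar (g : G ⧸ N) = ((σ g : G) : G ⧸ N))
    (μN : Measure N) [μN.IsHaarMeasure] [IsProbabilityMeasure μN] [μN.Regular]
    (Np : Subgroup N) (hNp : ∀ a : N, a ∈ Np ↔ σ (a : G) = (a : G))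
    (μNp : Measure Np) [μNp.IsHaarMeasure] [IsProbabilityMeasure μNp] [μNp.Regular]
    (eN : (Np × {a : N // σ (a : G) = (a : G)⁻¹}) ≃ₜ N)
    (heN : ∀ x : Np × {a : N // σ (a : G) = (a : G)⁻¹}, eN x = (x.1 : N) * (x.2 : N))
    (ε : ℤ) (hε : ε = 1 ∨ ε = -1)
    (μGε : Measure G)
    (hμGε : (ε = 1 ∧ μGε = Measure.map (fun a : Gp => (a : G)) μp) ∨
            (ε = -1 ∧ μGε = Measure.map (fun g : G => ((e.symm g).2 : G)) μG))
    (μNε : Measure G)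
    (hμNε : (ε = 1 ∧ μNε = Measure.map (fun a : Np => ((a : N) : G)) μNp) ∨
            (ε = -1 ∧ μNε = Measure.map (fun a : N => (((eN.symm a).2 : N) : G)) μN)) :
    μGε.restrict ((N : Set G) ∩ {a : G | σ a = a ^ ε}) =
      (Nat.card {x : G ⧸ N // σbar x = x ^ ε} : ENNReal)⁻¹ • μNε :=
  sigma_pro_p_group_restrict_haar_to_open_subgroup_general hodd hGpro σ hσcont hσ μG Gp hGp μp e he
    N hNopen σbar hσbar μN Np hNp μNp eN heN ε hε μGε hμGε μNε hμNε
end
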